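/- arXiv:2201.01268 — 9 statements merged into one kernel-verified Lean document; each statement's English description precedes it below -/
import Mathlib

section
/- Let B be a bounded subset of ℝ^d. Then the infimum over t ∈ B - B (the set of differences of elements of B) of the diameter of B ∩ (B - t) is 0. -/
open scoped Pointwise

/-!
If `t = x - y` with `x, y ∈ B` nearly realizing the diameter `D` of `B`, then `B ∩ (B - t)` is small:
for `z, w` in it, both `z - w + t` and `z - w - t` are differences of points of `B`, so the
parallelogram law gives `‖z - w‖² + ‖t‖² ≤ D²`.
-/

open Metric

theorem exists_lt_dist_of_lt_diam {α : Type*} [PseudoMetricSpace α] {s : Set α} {r : ℝ}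
    (hr : 0 ≤ r) (h : r < diam s) : ∃ x ∈ s, ∃ y ∈ s, r < dist x y := by
  by_contra! hle
  exact (diam_le_of_forall_dist_le hr hle).not_gt h

theorem exists_mem_sub_sq_diam_sub_sq_norm_le {E : Type*} [SeminormedAddCommGroup E] {B : Set E}
    (hne : B.Nonempty) {ε : ℝ} (hε : 0 < ε) : ∃ t ∈ B - B, diam B ^ 2 - ‖t‖ ^ 2 ≤ ε := by
  obtain ⟨x₀, hx₀⟩ := hne
  by_cases hsmall : diam B ^ 2 ≤ ε
  · exact ⟨0, ⟨x₀, hx₀, x₀, hx₀, sub_self x₀⟩, by simpa using hsmall⟩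
  have hpos : 0 ≤ diam B ^ 2 - ε := by linarith
  have hr : √(diam B ^ 2 - ε) < diam B := (Real.sqrt_lt hpos diam_nonneg).2 (by linarith)
  obtain ⟨x, hx, y, hy, hxy⟩ := exists_lt_dist_of_lt_diam (Real.sqrt_nonneg _) hr
  refine ⟨x - y, ⟨x, hx, y, hy, rfl⟩, ?_⟩
  rw [← dist_eq_norm]
  linarith [(Real.sqrt_lt hpos dist_nonneg).1 hxy]

section InnerProductSpace

variable {E : Type*} [NormedAddCommGroup E] [InnerProductSpace ℝ E]

theorem sq_norm_add_sq_norm_le_of_norm_add_le_of_norm_sub_le {u t : E} {D : ℝ}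
    (hadd : ‖u + t‖ ≤ D) (hsub : ‖u - t‖ ≤ D) : ‖u‖ ^ 2 + ‖t‖ ^ 2 ≤ D ^ 2 := by
  have hpar := parallelogram_law_with_norm ℝ u t
  nlinarith [norm_nonneg (u + t), norm_nonneg (u - t)]

theorem diam_inter_image_sub_le {B : Set E} (hB : Bornology.IsBounded B) (t : E) :
    diam (B ∩ (fun x => x - t) '' B) ≤ √(diam B ^ 2 - ‖t‖ ^ 2) := by
  refine diam_le_of_forall_dist_le (Real.sqrt_nonneg _) ?_
  have mem_image_sub : ∀ {z}, z ∈ (fun x => x - t) '' B → z + t ∈ B := by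
    rintro _ ⟨x, hx, rfl⟩
    simpa using hx
  rintro z ⟨hz, hzt⟩ w ⟨hw, hwt⟩
  have hadd : ‖z - w + t‖ ≤ diam B := by
    simpa [dist_eq_norm, sub_add_eq_add_sub] using dist_le_diam_of_mem hB (mem_image_sub hzt) hw
  have hsub : ‖z - w - t‖ ≤ diam B := by
    simpa [dist_eq_norm, sub_sub] using dist_le_diam_of_mem hB hz (mem_image_sub hwt)
  have hsq := sq_norm_add_sq_norm_le_of_norm_add_le_of_norm_sub_le hadd hsub
  rw [dist_eq_norm, Real.le_sqrt (norm_nonneg _) (sub_nonneg.2 ?_)]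
  · linarith
  · nlinarith [norm_nonneg (z - w)]

end InnerProductSpace

theorem stmt_0 {d : ℕ} (B : Set (EuclideanSpace ℝ (Fin d)))
    (hB : Bornology.IsBounded B) :
    sInf ((fun t => Metric.diam (B ∩ ((fun x => x - t) '' B))) '' (B - B)) = 0 := by
  rcases B.eq_empty_or_nonempty with rfl | hne
  · simp
  have hnonneg : ∀ a ∈ (fun t => diam (B ∩ (fun x => x - t) '' B)) '' (B - B), 0 ≤ a := by
    rintro _ ⟨t, -, rfl⟩
    exact diam_nonneg
  refine le_antisymm (le_of_forall_pos_le_add fun ε hε => ?_) (Real.sInf_nonneg hnonneg)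
  obtain ⟨t, ht, hnorm⟩ := exists_mem_sub_sq_diam_sub_sq_norm_le hne (pow_pos hε 2)
  calc sInf _ ≤ diam (B ∩ (fun x => x - t) '' B) := csInf_le ⟨0, hnonneg⟩ ⟨t, ht, rfl⟩
    _ ≤ √(diam B ^ 2 - ‖t‖ ^ 2) := diam_inter_image_sub_le hB t
    _ ≤ √(ε ^ 2) := Real.sqrt_le_sqrt hnorm
    _ = 0 + ε := by rw [Real.sqrt_sq hε.le, zero_add]
end

section
/- Let M ∈ M_d(ℤ) be a pseudo-unimodular matrix, i.e., the product of all its non-zero complex eigenvalues, counted with algebraic multiplicity, equals ±1. Then there exists m ≥ 1 such that for every y ∈ ℤ^d ∩ im(M^m), there exists x ∈ ℤ^d ∩ im(M^m) with M^m x = y. -/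
open scoped Classical in
/-- A square integer matrix is pseudo-unimodular if the product of its non-zero
complex eigenvalues, counted with algebraic multiplicity, equals `±1`. -/
def PseudoUnimodular {d : ℕ} (M : Matrix (Fin d) (Fin d) ℤ) : Prop :=
  ((M.map (fun x : ℤ => (x : ℂ))).charpoly.roots.filter (fun z => z ≠ 0)).prod = 1 ∨
  ((M.map (fun x : ℤ => (x : ℂ))).charpoly.roots.filter (fun z => z ≠ 0)).prod = -1

/-!
The characteristic polynomial of `M` is `X ^ r * q` with `q 0 ≠ 0`, and up to sign `q 0` is the
product of the non-zero eigenvalues, so `q 0 = ±1`. Writing `q(M) = M S + q 0`, Cayley–Hamilton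
`M ^ r q(M) = 0` becomes `M ^ r (M B) = M ^ r` for the integer matrix `B = -(q 0)⁻¹ S`, which
commutes with `M`. Hence for `m > r` the integer matrix `B ^ m` is a generalized inverse of `M ^ m`
commuting with it, and `x = B ^ m y` solves `M ^ m x = y` inside the image of `M ^ m`.
-/

open Polynomial Matrix

open scoped Classical in
theorem Polynomial.prod_nonzero_roots_map_X_pow_mul {R K : Type*} [CommRing R] [Field K]
    [IsAlgClosed K] {f : R →+* K} (hf : Function.Injective f) {q : R[X]} (hq : q.Monic)
    (hX : ¬ X ∣ q) (r : ℕ) :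
    (((X ^ r * q).map f).roots.filter (· ≠ 0)).prod = (-1) ^ q.natDegree * f (q.coeff 0) := by
  have hqf : (q.map f).coeff 0 ≠ 0 := by
    rw [coeff_map, map_ne_zero_iff f hf]
    exact fun h => hX (X_dvd_iff.mpr h)
  have hroots : ((q.map f).roots.filter (· ≠ 0)) = (q.map f).roots :=
    Multiset.filter_eq_self.mpr fun z hz h0 => hqf <| by
      subst h0; rw [coeff_zero_eq_eval_zero]; exact (mem_roots (hq.map f).ne_zero).mp hz
  have hfilter : ((X ^ r * q).map f).roots.filter (· ≠ 0) = (q.map f).roots := by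
    rw [Polynomial.map_mul, Polynomial.map_pow, map_X,
      roots_mul (mul_ne_zero (pow_ne_zero _ X_ne_zero) (hq.map f).ne_zero), roots_X_pow,
      Multiset.filter_add, Multiset.nsmul_singleton,
      Multiset.filter_eq_nil.mpr fun _ ha => not_not.mpr (Multiset.eq_of_mem_replicate ha),
      zero_add, hroots]
  rw [hfilter, ← coeff_map,
    (IsAlgClosed.splits _).coeff_zero_eq_prod_roots_of_monic (hq.map f), hq.natDegree_map,
    ← mul_assoc, ← pow_add, ← two_mul, pow_mul, neg_one_sq, one_pow, one_mul]

theorem PseudoUnimodular.isUnit_coeff_zero {d : ℕ} {M : Matrix (Fin d) (Fin d) ℤ}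
    (hM : PseudoUnimodular M) {r : ℕ} {q : ℤ[X]} (hq : M.charpoly = X ^ r * q)
    (hX : ¬ X ∣ q) : IsUnit (q.coeff 0) := by
  have hqm : q.Monic := (monic_X_pow r).of_mul_monic_left (hq ▸ M.charpoly_monic)
  have hprod : ((M.map (fun x : ℤ => (x : ℂ))).charpoly.roots.filter (· ≠ 0)).prod =
      (-1) ^ q.natDegree * (q.coeff 0 : ℂ) := by
    have := prod_nonzero_roots_map_X_pow_mul (Int.castRingHom ℂ).injective_int hqm hX r
    rwa [← hq, ← Matrix.charpoly_map] at this
  have hsq : ((-1) ^ q.natDegree * (q.coeff 0 : ℂ)) ^ 2 = 1 := by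
    rcases hM with h | h <;> rw [← hprod, h] <;> norm_num
  rw [mul_pow, ← pow_mul, pow_mul', neg_one_sq, one_pow, one_mul] at hsq
  exact IsUnit.of_pow_eq_one (n := 2) (by exact_mod_cast hsq) two_ne_zero

theorem exists_commute_pow_mul_mul_eq_pow {R A : Type*} [CommRing R] [Ring A] [Algebra R A]
    {a : A} {q : R[X]} {r : ℕ} (hq : IsUnit (q.coeff 0)) (ha : aeval a (X ^ r * q) = 0) :
    ∃ b, Commute a b ∧ a ^ r * (a * b) = a ^ r := by
  obtain ⟨u, hu⟩ := hq
  set s := aeval a q.divX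
  have hqa : aeval a q = a * s + (u : R) • 1 := by
    conv_lhs => rw [← q.X_mul_divX_add, ← hu]
    simp [s, Algebra.algebraMap_eq_smul_one]
  have has : Commute a s := by simpa using (Commute.all X q.divX).map (aeval a)
  refine ⟨-(↑u⁻¹ : R) • s, has.smul_right _, ?_⟩
  rw [map_mul, map_pow, aeval_X, hqa, mul_add, mul_smul_comm, mul_one,
    add_eq_zero_iff_eq_neg] at ha
  rw [mul_smul_comm, mul_smul_comm, ha, smul_neg, neg_smul, neg_neg, smul_smul,
    Units.inv_mul, one_smul]

theorem pow_mul_pow_mul_pow_eq_pow {G : Type*} [Monoid G] {a b : G} (hab : Commute a b)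
    {r m : ℕ} (hr : a ^ r * (a * b) = a ^ r) (hrm : r ≤ m) :
    a ^ m * b ^ m * a ^ m = a ^ m := by
  have hrk : ∀ k, a ^ r * (a * b) ^ k = a ^ r := by
    intro k
    induction k with
    | zero => rw [pow_zero, mul_one]
    | succ k ih => rw [pow_succ, ← mul_assoc, ih, hr]
  calc a ^ m * b ^ m * a ^ m = a ^ m * (a * b) ^ m := by
        rw [mul_assoc, ← (hab.pow_pow m m).eq, hab.mul_pow]
    _ = a ^ (m - r) * (a ^ r * (a * b) ^ m) := by
        rw [← mul_assoc, ← pow_add, Nat.sub_add_cancel hrm]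
    _ = a ^ m := by rw [hrk, ← pow_add, Nat.sub_add_cancel hrm]

theorem Matrix.map_mulVec_mem_range_and_mulVec_eq {n R S : Type*} [Fintype n]
    [CommSemiring R] [CommSemiring S] {f : R →+* S} (hf : Function.Injective f)
    {N B : Matrix n n R} (hNB : Commute N B) (hNBN : N * B * N = N) {y : n → R}
    (hy : f ∘ y ∈ Set.range (N.map f).mulVec) :
    f ∘ (B *ᵥ y) ∈ Set.range (N.map f).mulVec ∧ N *ᵥ (B *ᵥ y) = y := by
  obtain ⟨v, hv⟩ := hy
  have hmap : ∀ (P : Matrix n n R) (w : n → R), f ∘ (P *ᵥ w) = P.map f *ᵥ (f ∘ w) :=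
    fun P w => funext (RingHom.map_mulVec f P w)
  refine ⟨⟨B.map f *ᵥ v, ?_⟩, ?_⟩
  · rw [hmap, ← hv, mulVec_mulVec, mulVec_mulVec, ← Matrix.map_mul, ← Matrix.map_mul,
      hNB.eq]
  · refine hf.comp_left (?_ : f ∘ (N *ᵥ B *ᵥ y) = f ∘ y)
    rw [hmap, hmap, ← hv, mulVec_mulVec, mulVec_mulVec, ← Matrix.map_mul, ← Matrix.map_mul,
      hNBN]

theorem stmt_2 {d : ℕ} (M : Matrix (Fin d) (Fin d) ℤ) (hpu : PseudoUnimodular M) :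
    ∃ m : ℕ, 1 ≤ m ∧ ∀ y : Fin d → ℤ,
      ((fun i => (y i : ℝ)) ∈ Set.range ((M.map (fun x : ℤ => (x : ℝ))) ^ m).mulVec) →
      ∃ x : Fin d → ℤ,
        ((fun i => (x i : ℝ)) ∈ Set.range ((M.map (fun x : ℤ => (x : ℝ))) ^ m).mulVec) ∧
        (M ^ m).mulVec x = y := by
  obtain ⟨q, hq, hX⟩ :=
    M.charpoly.exists_eq_pow_rootMultiplicity_mul_and_not_dvd M.charpoly_monic.ne_zero 0
  rw [map_zero, sub_zero] at hq hX
  set r := M.charpoly.rootMultiplicity 0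
  obtain ⟨B, hMB, hB⟩ :=
    exists_commute_pow_mul_mul_eq_pow (hpu.isUnit_coeff_zero hq hX) (hq ▸ M.aeval_self_charpoly)
  refine ⟨r + 1, Nat.le_add_left 1 r, fun y hy => ⟨B ^ (r + 1) *ᵥ y, ?_⟩⟩
  have hpow :
      (M.map (fun x : ℤ => (x : ℝ))) ^ (r + 1) = (M ^ (r + 1)).map (Int.castRingHom ℝ) :=
    (Matrix.map_pow M (Int.castRingHom ℝ) (r + 1)).symm
  rw [hpow] at hy ⊢
  exact map_mulVec_mem_range_and_mulVec_eq (Int.castRingHom ℝ).injective_int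
    (hMB.pow_pow _ _) (pow_mul_pow_mul_pow_eq_pow hMB hB r.le_succ) hy
end

section
/- Let α ∈ ℝ and let M ∈ M_d(ℤ) be pseudo-unimodular. Then α·(1,…,1)·Mⁿ → 0 modulo ℤ^d as n → ∞ if and only if there exists a row vector w ∈ ℤ^d such that (α·(1,…,1) − w)·Mⁿ → 0 in ℝ^d as n → ∞. -/
open Polynomial Filter Topology Matrix

namespace Polynomial

theorem exists_eq_X_pow_natTrailingDegree_mul {R : Type*} [Semiring R] (p : R[X]) :
    ∃ q : R[X], p = X ^ p.natTrailingDegree * q ∧ q.coeff 0 = p.trailingCoeff := by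
  obtain ⟨q, hq⟩ := (X_pow_dvd_iff (f := p)).2 fun _ he =>
    coeff_eq_zero_of_lt_natTrailingDegree he
  refine ⟨q, hq, ?_⟩
  simpa [trailingCoeff, ← hq] using (coeff_X_pow_mul q p.natTrailingDegree 0).symm

theorem roots_X_pow_mul_filter_ne_zero {K : Type*} [Field K]
    [DecidablePred fun z : K => z ≠ 0] (k : ℕ) {q : K[X]} (hq : q.coeff 0 ≠ 0) :
    (X ^ k * q).roots.filter (· ≠ 0) = q.roots := by
  have hq0 : q ≠ 0 := fun h => hq (by simp [h])
  rw [roots_mul (mul_ne_zero (pow_ne_zero _ X_ne_zero) hq0), roots_X_pow, Multiset.filter_add,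
    Multiset.filter_eq_nil.2 fun a ha => by simp_all, zero_add, Multiset.filter_eq_self]
  intro a ha h0
  have hroot := isRoot_of_mem_roots ha
  rw [h0] at hroot
  exact hq (by rwa [coeff_zero_eq_eval_zero])

end Polynomial

theorem exists_commute_pow_eq_pow_succ_mul_of_aeval_eq_zero {R A : Type*} [CommRing R] [Ring A]
    [Algebra R A] {a : A} {p : R[X]} (hp : IsUnit p.trailingCoeff) (ha : aeval a p = 0) :
    ∃ (k : ℕ) (b : A), Commute a b ∧ a ^ k = a ^ (k + 1) * b := by
  obtain ⟨q, hpq, hq0⟩ := p.exists_eq_X_pow_natTrailingDegree_mul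
  set k := p.natTrailingDegree
  obtain ⟨u, hu⟩ := hp
  have hzero : a ^ (k + 1) * aeval a q.divX + (u : R) • a ^ k = 0 := by
    calc _ = aeval a (X ^ k * (X * q.divX + C (q.coeff 0))) := by
          simp [hq0, ← hu, Algebra.smul_def, pow_succ, mul_add, mul_assoc, Algebra.commutes]
      _ = 0 := by rw [X_mul_divX_add, ← hpq, ha]
  refine ⟨k, -((u⁻¹ : Rˣ) : R) • aeval a q.divX,
    (by simpa using (commute_X q.divX).map (aeval a) : Commute a _).smul_right _, ?_⟩
  rw [mul_smul_comm, eq_neg_of_add_eq_zero_left hzero, neg_smul, smul_neg, neg_neg, smul_smul,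
    Units.inv_mul, one_smul]

theorem PseudoUnimodular.isUnit_trailingCoeff_charpoly {d : ℕ} {M : Matrix (Fin d) (Fin d) ℤ}
    (hM : PseudoUnimodular M) : IsUnit M.charpoly.trailingCoeff := by
  obtain ⟨q, hpq, hq0⟩ := M.charpoly.exists_eq_X_pow_natTrailingDegree_mul
  have hq : q.Monic := (monic_X_pow _).of_mul_monic_left (hpq ▸ M.charpoly_monic)
  have hqC : (q.map (Int.castRingHom ℂ)).coeff 0 ≠ 0 := by
    rw [coeff_map, hq0, eq_intCast]
    exact_mod_cast trailingCoeff_nonzero_iff_nonzero.2 M.charpoly_monic.ne_zero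
  have hcharpoly : (M.map (fun x : ℤ => (x : ℂ))).charpoly =
      X ^ M.charpoly.natTrailingDegree * q.map (Int.castRingHom ℂ) := by
    rw [← Polynomial.map_X (Int.castRingHom ℂ), ← Polynomial.map_pow, ← Polynomial.map_mul, ← hpq]
    exact M.charpoly_map (Int.castRingHom ℂ)
  have hprod := (IsAlgClosed.splits (q.map (Int.castRingHom ℂ))).coeff_zero_eq_prod_roots_of_monic
    (hq.map _)
  rw [coeff_map, hq0, eq_intCast,
    ← roots_X_pow_mul_filter_ne_zero M.charpoly.natTrailingDegree hqC, ← hcharpoly] at hprod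
  have hcast : (M.charpoly.trailingCoeff : ℂ) = 1 ∨ (M.charpoly.trailingCoeff : ℂ) = -1 := by
    rcases hM with h | h <;>
      rcases neg_one_pow_eq_or ℂ (q.map (Int.castRingHom ℂ)).natDegree with h' | h' <;>
      rw [h, h'] at hprod <;> norm_num at hprod <;> simp [hprod]
  rw [Int.isUnit_iff]
  exact_mod_cast hcast

theorem pow_eq_pow_add_mul_pow_of_pow_eq_pow_succ_mul {M : Type*} [Monoid M] {a b : M} {k : ℕ}
    (h : a ^ k = a ^ (k + 1) * b) {m : ℕ} (hm : k ≤ m) (j : ℕ) : a ^ m = a ^ (m + j) * b ^ j := by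
  have step : ∀ m, k ≤ m → a ^ m = a ^ (m + 1) * b := by
    intro m hm
    obtain ⟨t, rfl⟩ := Nat.exists_eq_add_of_le hm
    rw [add_comm k t, pow_add, h, ← mul_assoc, ← pow_add, add_assoc]
  induction j generalizing m with
  | zero => simp
  | succ j ih =>
    rw [step m hm, ih (m := m + 1) (by omega), mul_assoc, ← pow_succ, add_assoc, add_comm 1 j]

theorem Matrix.exists_eventually_eq_vecMul_pow {ι R : Type*} [Fintype ι] [DecidableEq ι]
    [Semiring R] {M A : Matrix ι ι R} {k : ℕ} (hMA : Commute M A)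
    (hk : M ^ k = M ^ (k + 1) * A) {z : ℕ → ι → R} (hz : ∀ᶠ n in atTop, z (n + 1) = z n ᵥ* M) :
    ∃ w : ι → R, ∀ᶠ n in atTop, z n = w ᵥ* M ^ n := by
  obtain ⟨N, hN⟩ := eventually_atTop.1 hz
  have hzN : ∀ m, z (N + m) = z N ᵥ* M ^ m := by
    intro m
    induction m with
    | zero => simp
    | succ m ih => rw [← add_assoc, hN _ (N.le_add_right m), ih, vecMul_vecMul, pow_succ]
  refine ⟨z N ᵥ* A ^ N, eventually_atTop.2 ⟨N + k, fun n hn => ?_⟩⟩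
  obtain ⟨m, rfl⟩ := Nat.exists_eq_add_of_le (le_of_add_le_left hn)
  rw [hzN, vecMul_vecMul, ← ((hMA.pow_pow _ _).eq), add_comm N m,
    ← pow_eq_pow_add_mul_pow_of_pow_eq_pow_succ_mul hk (by omega : k ≤ m) N]

theorem Int.cast_comp_vecMul {ι R : Type*} [Fintype ι] [Ring R] (v : ι → ℤ) (M : Matrix ι ι ℤ) :
    ((↑) ∘ (v ᵥ* M) : ι → R) = ((↑) ∘ v) ᵥ* M.map (↑) := by
  ext i
  simpa using (Int.castRingHom R).map_vecMul M v i

theorem eventually_eq_zero_of_tendsto_intCast {α ι : Type*} [Finite ι] {l : Filter α}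
    {z : α → ι → ℤ} (hz : Tendsto (fun a => ((↑) ∘ z a : ι → ℝ)) l (𝓝 0)) :
    ∀ᶠ a in l, z a = 0 := by
  have hcoord (i : ι) : ∀ᶠ a in l, z a i = 0 := by
    rw [← tendsto_pure, ← nhds_discrete,
      Int.isClosedEmbedding_coe_real.isEmbedding.tendsto_nhds_iff]
    simpa [Function.comp_def] using tendsto_pi_nhds.1 hz i
  filter_upwards [eventually_all.2 hcoord] with a ha
  exact funext ha

theorem tendsto_addCircle_one_iff_exists_int {α ι : Type*} {l : Filter α} {x : α → ι → ℝ} :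
    Tendsto (fun a i => (x a i : AddCircle (1 : ℝ))) l (𝓝 0) ↔
      ∃ z : α → ι → ℤ, Tendsto (fun a => x a - (↑) ∘ z a) l (𝓝 0) := by
  constructor
  · intro h
    refine ⟨fun a i => round (x a i), tendsto_pi_nhds.2 fun i => ?_⟩
    have hi := tendsto_zero_iff_norm_tendsto_zero.1 (tendsto_pi_nhds.1 h i)
    simp only [UnitAddCircle.norm_eq] at hi
    simpa using tendsto_zero_iff_abs_tendsto_zero _ |>.2 hi
  · rintro ⟨z, hz⟩
    have hquot : Continuous fun v : ι → ℝ => fun i => (v i : AddCircle (1 : ℝ)) :=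
      continuous_pi fun i => (AddCircle.continuous_mk' 1).comp (continuous_apply i)
    refine (hquot.tendsto' 0 0 (by ext; simp) |>.comp hz).congr fun a => ?_
    ext i
    simp

theorem eventually_vecMul_eq_of_tendsto_sub_intCast {ι : Type*} [Fintype ι] {M : Matrix ι ι ℤ}
    {x : ℕ → ι → ℝ} (hx : ∀ n, x (n + 1) = x n ᵥ* M.map (↑)) {z : ℕ → ι → ℤ}
    (hz : Tendsto (fun n => x n - (↑) ∘ z n) atTop (𝓝 0)) :
    ∀ᶠ n in atTop, z (n + 1) = z n ᵥ* M := by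
  have hdiff : Tendsto (fun n => ((↑) ∘ (z (n + 1) - z n ᵥ* M) : ι → ℝ)) atTop (𝓝 0) := by
    have hlim := (((continuous_id.matrix_vecMul
      (continuous_const (y := M.map ((↑) : ℤ → ℝ)))).tendsto 0).comp hz).sub
      (hz.comp (tendsto_add_atTop_nat 1))
    simp only [id, zero_vecMul, sub_zero] at hlim
    refine hlim.congr fun n => ?_
    simp only [Function.comp_apply, sub_vecMul, ← Int.cast_comp_vecMul, ← hx]
    ext i
    simp
  filter_upwards [eventually_eq_zero_of_tendsto_intCast hdiff] with n hn
  exact sub_eq_zero.1 hn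

theorem tendsto_vecMul_pow_addCircle_iff {ι : Type*} [Fintype ι] [DecidableEq ι]
    {M A : Matrix ι ι ℤ} {k : ℕ} (hMA : Commute M A) (hk : M ^ k = M ^ (k + 1) * A)
    (v : ι → ℝ) :
    Tendsto (fun n i => ((v ᵥ* M.map (↑) ^ n) i : AddCircle (1 : ℝ))) atTop (𝓝 0) ↔
      ∃ w : ι → ℤ, Tendsto (fun n => (fun i => v i - w i) ᵥ* M.map (↑) ^ n) atTop (𝓝 0) := by
  have hsub : ∀ (w : ι → ℤ) n, (fun i => v i - w i) ᵥ* M.map (↑) ^ n =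
      v ᵥ* M.map (↑) ^ n - (↑) ∘ (w ᵥ* M ^ n) := by
    intro w n
    have hpow : (M ^ n).map ((↑) : ℤ → ℝ) = M.map (↑) ^ n := M.map_pow (Int.castRingHom ℝ) n
    rw [Int.cast_comp_vecMul, hpow, ← sub_vecMul]
    rfl
  rw [tendsto_addCircle_one_iff_exists_int]
  constructor
  · rintro ⟨z, hz⟩
    obtain ⟨w, hw⟩ := exists_eventually_eq_vecMul_pow hMA hk
      (eventually_vecMul_eq_of_tendsto_sub_intCast (fun n => by rw [pow_succ, vecMul_vecMul]) hz)
    exact ⟨w, hz.congr' (hw.mono fun n hn => by beta_reduce; rw [hsub, hn])⟩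
  · rintro ⟨w, hw⟩
    exact ⟨fun n => w ᵥ* M ^ n, by simpa only [hsub] using hw⟩

theorem stmt_3 {d : ℕ} (α : ℝ) (M : Matrix (Fin d) (Fin d) ℤ) (hpu : PseudoUnimodular M) :
    Filter.Tendsto
      (fun n : ℕ => fun i : Fin d =>
        ((Matrix.vecMul (fun _ => α) ((M.map (fun x : ℤ => (x : ℝ))) ^ n)) i : AddCircle (1 : ℝ)))
      Filter.atTop (nhds 0) ↔
    ∃ w : Fin d → ℤ, Filter.Tendsto
      (fun n : ℕ => Matrix.vecMul (fun i => α - (w i : ℝ)) ((M.map (fun x : ℤ => (x : ℝ))) ^ n))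
      Filter.atTop (nhds 0) := by
  obtain ⟨k, A, hMA, hk⟩ := exists_commute_pow_eq_pow_succ_mul_of_aeval_eq_zero
    hpu.isUnit_trailingCoeff_charpoly M.aeval_self_charpoly
  exact tendsto_vecMul_pow_addCircle_iff hMA hk _
end

section
/- Let α ∈ ℝ, let M be a real d×d matrix, and let w ∈ ℝ^d be a row vector. Then (α·(1,…,1) − w)·Mⁿ → 0 as n → ∞ if and only if for every generalized eigenvector v of M associated to an eigenvalue of modulus ≥ 1: w·v = α if the sum of the coordinates of v equals 1, and w·v = 0 if the sum of the coordinates of v equals 0. -/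
/-!
Write `u = α·(1,…,1) − w` and complexify. Then `u Mⁿ → 0` iff `u·(Mⁿ x) → 0` for every
`x ∈ ℂᵈ`, and `ℂᵈ` is the sum of the generalized eigenspaces of `M`. If `(M − β)ᵏ x = 0`, the
sequence `aₙ = u·(Mⁿ x)` satisfies `aₙ₊₁ − β aₙ = u·(Mⁿ (M − β) x)`, a sequence of the same kind
with `k − 1` in place of `k`. Induction on `k` shows: for `|β| < 1` the sequence always tends
to `0`, while for `|β| ≥ 1` it tends to `0` only if it vanishes identically, because a nonzero
geometric sequence of ratio `β` does not decay. Hence `u Mⁿ → 0` iff `u·v = 0` for every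
generalized eigenvector `v` of an eigenvalue of modulus `≥ 1`; rescaling `v` to coordinate sum
`1` (or keeping sum `0`) turns this into the stated conditions.
-/

/-- `v` is a generalized eigenvector of the complex matrix `M` for the eigenvalue `β`. -/
def IsGenEigvec {d : ℕ} (M : Matrix (Fin d) (Fin d) ℂ) (β : ℂ) (v : Fin d → ℂ) : Prop :=
  v ≠ 0 ∧ ∃ k : ℕ, 1 ≤ k ∧ ((M - β • 1) ^ k).mulVec v = 0

open Filter Topology Matrix

section Sequences

variable {𝕜 E : Type*} [NormedField 𝕜] [NormedAddCommGroup E] [NormedSpace 𝕜 E]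

theorem tendsto_zero_of_tendsto_sub_smul {β : 𝕜} (hβ : ‖β‖ < 1) {a : ℕ → E}
    (h : Tendsto (fun n => a (n + 1) - β • a n) atTop (𝓝 0)) : Tendsto a atTop (𝓝 0) := by
  set r := ‖β‖
  rw [Metric.tendsto_atTop]
  intro ε hε
  have hnorm : Tendsto (fun n => ‖a (n + 1) - β • a n‖) atTop (𝓝 0) := by simpa using h.norm
  obtain ⟨N, hN⟩ := eventually_atTop.1 <|
    hnorm.eventually (eventually_lt_nhds (mul_pos (sub_pos.2 hβ) (half_pos hε)))
  have hstep : ∀ n ≥ N, ‖a (n + 1)‖ - ε / 2 ≤ r * (‖a n‖ - ε / 2) := by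
    intro n hn
    have := norm_le_insert' (a (n + 1)) (β • a n)
    rw [norm_smul] at this
    nlinarith [hN n hn]
  have hgeom : ∀ m, ‖a (N + m)‖ - ε / 2 ≤ r ^ m * (‖a N‖ - ε / 2) := by
    intro m
    induction m with
    | zero => simp
    | succ m ih =>
      calc ‖a (N + m + 1)‖ - ε / 2 ≤ r * (‖a (N + m)‖ - ε / 2) := hstep _ le_self_add
        _ ≤ r * (r ^ m * (‖a N‖ - ε / 2)) := by gcongr
        _ = r ^ (m + 1) * (‖a N‖ - ε / 2) := by ring
  obtain ⟨m₀, hm₀⟩ := eventually_atTop.1 <|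
    ((tendsto_pow_atTop_nhds_zero_of_lt_one (norm_nonneg β) hβ).mul_const
      (‖a N‖ - ε / 2)).eventually (eventually_lt_nhds (b := ε / 2) (by simpa using hε))
  refine ⟨N + m₀, fun n hn => ?_⟩
  obtain ⟨m, rfl⟩ := Nat.exists_eq_add_of_le (le_self_add.trans hn)
  rw [dist_zero_right]
  linarith [hgeom m, hm₀ m (by omega)]

theorem eq_zero_of_tendsto_of_forall_eq_smul {β : 𝕜} (hβ : 1 ≤ ‖β‖) {a : ℕ → E}
    (hrec : ∀ n, a (n + 1) = β • a n) (h : Tendsto a atTop (𝓝 0)) (n : ℕ) : a n = 0 := by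
  have hgeom : ∀ n, a n = β ^ n • a 0 := by
    intro n
    induction n with
    | zero => simp
    | succ n ih => rw [hrec, ih, smul_smul, pow_succ']
  have hgrow : ∀ n, ‖a 0‖ ≤ ‖a n‖ := fun n => by
    rw [hgeom n, norm_smul, norm_pow]
    exact le_mul_of_one_le_left (norm_nonneg _) (one_le_pow₀ hβ)
  have h0 : a 0 = 0 := norm_le_zero_iff.1 <| ge_of_tendsto' (by simpa using h.norm) hgrow
  rw [hgeom n, h0, smul_zero]

end Sequences

namespace Module.End

theorem apply_pow_apply_sub_smul {R V E : Type*} [CommRing R] [AddCommGroup V] [Module R V]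
    [AddCommGroup E] [Module R E] (f : End R V) (φ : V →ₗ[R] E) (β : R) (x : V) (n : ℕ) :
    φ ((f ^ n) ((f - β • 1) x)) = φ ((f ^ (n + 1)) x) - β • φ ((f ^ n) x) := by
  simp only [pow_succ, mul_apply, LinearMap.sub_apply, LinearMap.smul_apply, one_apply,
    map_sub, map_smul]

variable {𝕜 V E : Type*} [NormedField 𝕜] [AddCommGroup V] [Module 𝕜 V]
  [NormedAddCommGroup E] [NormedSpace 𝕜 E] (f : End 𝕜 V) (φ : V →ₗ[𝕜] E)

theorem tendsto_apply_pow_apply_of_mem_maxGenEigenspace {β : 𝕜} (hβ : ‖β‖ < 1) {x : V}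
    (hx : x ∈ f.maxGenEigenspace β) : Tendsto (fun n => φ ((f ^ n) x)) atTop (𝓝 0) := by
  obtain ⟨k, hk⟩ := (mem_maxGenEigenspace f β x).1 hx
  clear hx
  induction k generalizing x with
  | zero => simp_all
  | succ k ih =>
    exact tendsto_zero_of_tendsto_sub_smul hβ <|
      (ih (by rwa [pow_succ, mul_apply] at hk)).congr (apply_pow_apply_sub_smul f φ β x)

theorem apply_pow_apply_eq_zero_of_mem_maxGenEigenspace {β : 𝕜} (hβ : 1 ≤ ‖β‖) {x : V}
    (hx : x ∈ f.maxGenEigenspace β) (h : Tendsto (fun n => φ ((f ^ n) x)) atTop (𝓝 0))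
    (n : ℕ) : φ ((f ^ n) x) = 0 := by
  obtain ⟨k, hk⟩ := (mem_maxGenEigenspace f β x).1 hx
  clear hx
  induction k generalizing x n with
  | zero => simp_all
  | succ k ih =>
    have hsub (m : ℕ) : φ ((f ^ m) ((f - β • 1) x)) = 0 := by
      refine ih ?_ m (by rwa [pow_succ, mul_apply] at hk)
      simpa only [apply_pow_apply_sub_smul, smul_zero, sub_zero] using
        ((tendsto_add_atTop_iff_nat 1).2 h).sub (h.const_smul β)
    refine eq_zero_of_tendsto_of_forall_eq_smul hβ (fun m => ?_) h n
    rw [← sub_eq_zero, ← apply_pow_apply_sub_smul, hsub]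

theorem forall_tendsto_apply_pow_apply_iff [IsAlgClosed 𝕜] [FiniteDimensional 𝕜 V] :
    (∀ x, Tendsto (fun n => φ ((f ^ n) x)) atTop (𝓝 0)) ↔
      ∀ β : 𝕜, 1 ≤ ‖β‖ → ∀ x ∈ f.maxGenEigenspace β, φ x = 0 := by
  refine ⟨fun h β hβ x hx => ?_, fun h x => ?_⟩
  · simpa using apply_pow_apply_eq_zero_of_mem_maxGenEigenspace f φ hβ hx (h x) 0
  have hx : x ∈ ⨆ μ, f.maxGenEigenspace μ := by
    rw [iSup_maxGenEigenspace_eq_top]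
    trivial
  refine Submodule.iSup_induction
    (motive := fun x => Tendsto (fun n => φ ((f ^ n) x)) atTop (𝓝 0)) _ hx
    (fun μ y hy => ?_) (by simp) (fun y z hy hz => by simpa using hy.add hz)
  rcases lt_or_ge ‖μ‖ 1 with hμ | hμ
  · exact tendsto_apply_pow_apply_of_mem_maxGenEigenspace f φ hμ hy
  · have hzero (n : ℕ) : φ ((f ^ n) y) = 0 :=
      h μ hμ _ (mapsTo_maxGenEigenspace_of_comm ((Commute.refl f).pow_right n) μ hy)
    simp only [hzero, tendsto_const_nhds]

end Module.End

theorem Submodule.forall_normalized_iff_eq_mul {K V : Type*} [Field K] [AddCommGroup V]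
    [Module K V] (p : Submodule K V) (σ ψ : V →ₗ[K] K) (α : K) :
    (∀ v ∈ p, v ≠ 0 → (σ v = 1 → ψ v = α) ∧ (σ v = 0 → ψ v = 0)) ↔
      ∀ v ∈ p, ψ v = α * σ v := by
  refine ⟨fun h v hv => ?_, fun h v hv _ => ⟨fun h1 => by simp [h v hv, h1],
    fun h0 => by simp [h v hv, h0]⟩⟩
  obtain hv0 | hv0 := eq_or_ne v 0
  · simp [hv0]
  obtain hσ | hσ := eq_or_ne (σ v) 0
  · simp [hσ, (h v hv hv0).2 hσ]
  have hscaled := (h _ (p.smul_mem (σ v)⁻¹ hv) (smul_ne_zero (inv_ne_zero hσ) hv0)).1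
    (by simp [inv_mul_cancel₀ hσ])
  rw [map_smul, smul_eq_mul, inv_mul_eq_iff_eq_mul₀ hσ] at hscaled
  rw [hscaled, mul_comm]

theorem isGenEigvec_iff_mem_maxGenEigenspace {d : ℕ} (M : Matrix (Fin d) (Fin d) ℂ) (β : ℂ)
    (v : Fin d → ℂ) :
    IsGenEigvec M β v ↔ v ≠ 0 ∧ v ∈ Module.End.maxGenEigenspace (toLinAlgEquiv' M) β := by
  have hpow (k : ℕ) : ((toLinAlgEquiv' M - β • 1) ^ k) v = ((M - β • 1) ^ k) *ᵥ v := by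
    rw [← toLinAlgEquiv'_apply, map_pow, map_sub, map_smul, map_one]
  simp only [IsGenEigvec, Module.End.mem_maxGenEigenspace, hpow]
  refine and_congr_right fun _ =>
    ⟨fun ⟨k, _, hk⟩ => ⟨k, hk⟩, fun ⟨k, hk⟩ => ⟨k + 1, by omega, ?_⟩⟩
  rw [pow_succ', ← mulVec_mulVec, hk, mulVec_zero]

theorem tendsto_zero_iff_forall_tendsto_dotProduct {α ι R : Type*} [Fintype ι] [DecidableEq ι]
    [Semiring R] [TopologicalSpace R] [IsTopologicalSemiring R] {l : Filter α} {y : α → ι → R} :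
    Tendsto y l (𝓝 0) ↔ ∀ x, Tendsto (fun n => y n ⬝ᵥ x) l (𝓝 0) := by
  refine ⟨fun h x => ?_, fun h => tendsto_pi_nhds.2 fun i => ?_⟩
  · simpa [Function.comp_def] using
      ((continuous_id.dotProduct continuous_const).tendsto 0).comp h
  · simpa using h (Pi.single i 1)

theorem Matrix.ofReal_comp_vecMul_pow {n : Type*} [Fintype n] [DecidableEq n] (u : n → ℝ)
    (M : Matrix n n ℝ) (k : ℕ) :
    Complex.ofReal ∘ (u ᵥ* M ^ k) = (Complex.ofReal ∘ u) ᵥ* M.map (fun x : ℝ => (x : ℂ)) ^ k := by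
  ext i
  exact (Complex.ofRealHom.map_vecMul (M ^ k) u i).trans (by rw [Matrix.map_pow]; rfl)

theorem Complex.tendsto_ofReal_comp_iff {α ι : Type*} {l : Filter α} {y : α → ι → ℝ} :
    Tendsto (fun n => Complex.ofReal ∘ y n) l (𝓝 0) ↔ Tendsto y l (𝓝 0) := by
  simp only [tendsto_pi_nhds, Function.comp_apply, Pi.zero_apply, ← Complex.ofReal_zero,
    Filter.tendsto_ofReal_iff]

theorem stmt_4 {d : ℕ} (α : ℝ) (M : Matrix (Fin d) (Fin d) ℝ) (w : Fin d → ℝ) :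
    Filter.Tendsto (fun n : ℕ => Matrix.vecMul (fun i => α - w i) (M ^ n))
      Filter.atTop (nhds 0) ↔
    ∀ (β : ℂ) (v : Fin d → ℂ), 1 ≤ ‖β‖ →
      IsGenEigvec (M.map (fun x : ℝ => (x : ℂ))) β v →
      ((∑ i, v i) = 1 → (∑ i, (w i : ℂ) * v i) = (α : ℂ)) ∧
      ((∑ i, v i) = 0 → (∑ i, (w i : ℂ) * v i) = 0) := by
  set f := toLinAlgEquiv' (M.map fun x : ℝ => (x : ℂ))
  set σ := dotProductBilin ℂ ℂ (1 : Fin d → ℂ)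
  set ψ := dotProductBilin ℂ ℂ (fun i => (w i : ℂ))
  have hdot (n : ℕ) (x : Fin d → ℂ) :
      ((Complex.ofReal ∘ fun i => α - w i) ᵥ* (M.map fun x : ℝ => (x : ℂ)) ^ n) ⬝ᵥ x =
        ((α : ℂ) • σ - ψ) ((f ^ n) x) := by
    rw [← map_pow, toLinAlgEquiv'_apply, ← dotProduct_mulVec]
    simp [σ, ψ, dotProduct, sub_mul, Finset.mul_sum]
  rw [← Complex.tendsto_ofReal_comp_iff, funext (ofReal_comp_vecMul_pow _ M),
    tendsto_zero_iff_forall_tendsto_dotProduct]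
  simp only [hdot]
  rw [Module.End.forall_tendsto_apply_pow_apply_iff]
  simp only [LinearMap.sub_apply, LinearMap.smul_apply, smul_eq_mul, sub_eq_zero,
    eq_comm (a := (α : ℂ) * _), ← Submodule.forall_normalized_iff_eq_mul]
  have hσ (v : Fin d → ℂ) : σ v = ∑ i, v i := one_dotProduct v
  simp only [isGenEigvec_iff_mem_maxGenEigenspace, hσ]
  exact ⟨fun h β v hβ hv => h β hβ v hv.2 hv.1, fun h β hβ v hv hv0 => h β v hβ ⟨hv0, hv⟩⟩
end

section
/- Let M be a real d×d matrix, α ∈ ℝ and w ∈ ℝ^d a row vector such that for every generalized eigenvector v of M for an eigenvalue of modulus ≥ 1 one has (α·(1,…,1) − w)·v = 0. Then the convergence (α·(1,…,1) − w)·Mⁿ → 0 is exponential: there exist C > 0 and 0 < ρ < 1 such that ‖(α·(1,…,1) − w)·Mⁿ‖ ≤ C·ρⁿ for all n. -/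
open Matrix Module

def ExpDecays {E : Type*} [Norm E] (a : ℕ → E) : Prop :=
  ∃ C > 0, ∃ ρ : ℝ, 0 < ρ ∧ ρ < 1 ∧ ∀ n, ‖a n‖ ≤ C * ρ ^ n

namespace ExpDecays

variable {E F : Type*} [SeminormedAddCommGroup E] [SeminormedAddCommGroup F]

lemma zero : ExpDecays fun _ => (0 : E) :=
  ⟨1, one_pos, 1 / 2, by norm_num, by norm_num, fun n => by simp [pow_nonneg]⟩

lemma of_norm_le_mul {a : ℕ → E} {b : ℕ → F} (hb : ExpDecays b) (K : ℝ)
    (hab : ∀ n, ‖a n‖ ≤ K * ‖b n‖) : ExpDecays a := by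
  obtain ⟨C, hC, ρ, hρ0, hρ1, hbC⟩ := hb
  refine ⟨max K 1 * C, by positivity, ρ, hρ0, hρ1, fun n => ?_⟩
  calc ‖a n‖ ≤ K * ‖b n‖ := hab n
    _ ≤ max K 1 * ‖b n‖ := by gcongr; exact le_max_left K 1
    _ ≤ max K 1 * (C * ρ ^ n) := by gcongr; exact hbC n
    _ = max K 1 * C * ρ ^ n := by ring

lemma add {a b : ℕ → E} (ha : ExpDecays a) (hb : ExpDecays b) :
    ExpDecays fun n => a n + b n := by
  obtain ⟨C, hC, ρ, hρ0, hρ1, haC⟩ := ha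
  obtain ⟨C', hC', ρ', hρ0', hρ1', hbC'⟩ := hb
  refine ⟨C + C', by positivity, max ρ ρ', lt_max_of_lt_left hρ0, max_lt hρ1 hρ1', fun n => ?_⟩
  calc ‖a n + b n‖ ≤ C * ρ ^ n + C' * ρ' ^ n :=
        (norm_add_le _ _).trans (add_le_add (haC n) (hbC' n))
    _ ≤ C * max ρ ρ' ^ n + C' * max ρ ρ' ^ n := by gcongr <;> simp
    _ = (C + C') * max ρ ρ' ^ n := by ring

lemma finset_sum {ι : Type*} (s : Finset ι) {a : ι → ℕ → E} (ha : ∀ i ∈ s, ExpDecays (a i)) :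
    ExpDecays fun n => ∑ i ∈ s, a i n := by
  classical
  induction s using Finset.induction with
  | empty => simpa using zero
  | insert i s hi ih =>
    simp only [Finset.sum_insert hi]
    exact (ha i (s.mem_insert_self i)).add (ih fun j hj => ha j (Finset.mem_insert_of_mem hj))

lemma pi {ι : Type*} [Fintype ι] {G : ι → Type*} [∀ i, SeminormedAddCommGroup (G i)]
    {a : ℕ → ∀ i, G i} (ha : ∀ i, ExpDecays fun n => a n i) : ExpDecays a := by
  have hsum : ExpDecays fun n => ∑ i, ‖a n i‖ :=
    finset_sum _ fun i _ => (ha i).of_norm_le_mul 1 fun n => by simp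
  refine hsum.of_norm_le_mul 1 fun n => ?_
  rw [one_mul, Real.norm_of_nonneg (by positivity)]
  exact (pi_norm_le_iff_of_nonneg (by positivity)).2 fun i =>
    Finset.single_le_sum (f := fun i => ‖a n i‖) (fun i _ => norm_nonneg _) (Finset.mem_univ i)

lemma map {𝕜 : Type*} [NontriviallyNormedField 𝕜] [NormedSpace 𝕜 E] [NormedSpace 𝕜 F]
    {a : ℕ → E} (ha : ExpDecays a) (L : E →L[𝕜] F) : ExpDecays fun n => L (a n) :=
  ha.of_norm_le_mul ‖L‖ fun n => L.le_opNorm (a n)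

lemma of_succ_eq_smul_add {𝕜 : Type*} [NormedField 𝕜] [NormedSpace 𝕜 E]
    {a b : ℕ → E} {β : 𝕜} (hβ : ‖β‖ < 1) (hb : ExpDecays b)
    (hab : ∀ n, a (n + 1) = β • a n + b n) : ExpDecays a := by
  obtain ⟨C, hC, ρ, hρ0, hρ1, hbC⟩ := hb
  obtain ⟨σ, hσ, hσ1⟩ := exists_between (max_lt hβ hρ1)
  obtain ⟨hβσ, hρσ⟩ := max_lt_iff.1 hσ
  -- `K` is large enough to make `‖a n‖ ≤ K * σ ^ n` inductive.
  set K := ‖a 0‖ + C / (σ - ‖β‖)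
  have hCK : C ≤ K * (σ - ‖β‖) := by
    have := div_mul_cancel₀ C (sub_pos.2 hβσ).ne'
    nlinarith [norm_nonneg (a 0)]
  refine ⟨K, by positivity, σ, by linarith, hσ1, fun n => ?_⟩
  induction n with
  | zero => simp [K]; positivity
  | succ n ih =>
    calc ‖a (n + 1)‖ ≤ ‖β‖ * ‖a n‖ + ‖b n‖ := by
          rw [hab n]; exact (norm_add_le _ _).trans (by gcongr; exact norm_smul_le β (a n))
      _ ≤ ‖β‖ * (K * σ ^ n) + C * σ ^ n := by
          gcongr
          exact (hbC n).trans (by gcongr)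
      _ ≤ K * σ ^ (n + 1) := by
          rw [pow_succ]; nlinarith [pow_pos (hρ0.trans hρσ) n]

end ExpDecays

lemma expDecays_pow_apply_of_mem_maxGenEigenspace {𝕜 E : Type*} [NormedField 𝕜]
    [SeminormedAddCommGroup E] [NormedSpace 𝕜 E] (f : End 𝕜 E) {β : 𝕜} (hβ : ‖β‖ < 1) {v : E}
    (hv : v ∈ f.maxGenEigenspace β) : ExpDecays fun n => (f ^ n) v := by
  obtain ⟨k, hk⟩ := (f.mem_maxGenEigenspace β v).1 hv
  clear hv
  induction k generalizing v with
  | zero => simpa [show v = 0 by simpa using hk] using ExpDecays.zero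
  | succ k ih =>
    refine ExpDecays.of_succ_eq_smul_add hβ (ih (by rwa [← End.mul_apply, ← pow_succ])) fun n => ?_
    rw [pow_succ, End.mul_apply, ← map_smul, ← map_add, LinearMap.sub_apply, LinearMap.smul_apply,
      End.one_apply, add_sub_cancel]

lemma expDecays_apply_pow_apply {𝕜 E F : Type*} [NontriviallyNormedField 𝕜] [IsAlgClosed 𝕜]
    [NormedAddCommGroup E] [NormedSpace 𝕜 E] [FiniteDimensional 𝕜 E]
    [SeminormedAddCommGroup F] [NormedSpace 𝕜 F] (f : End 𝕜 E) (u : E →L[𝕜] F)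
    (hu : ∀ β : 𝕜, 1 ≤ ‖β‖ → ∀ y ∈ f.maxGenEigenspace β, u y = 0) (x : E) :
    ExpDecays fun n => u ((f ^ n) x) := by
  have hx : x ∈ ⨆ β, f.maxGenEigenspace β := by
    rw [End.iSup_maxGenEigenspace_eq_top]; trivial
  refine Submodule.iSup_induction (motive := fun x => ExpDecays fun n => u ((f ^ n) x)) _ hx
    (fun β y hy => ?_) (by simpa using ExpDecays.zero) fun y z hy hz => ?_
  · rcases lt_or_ge ‖β‖ 1 with hβ | hβ
    · exact (expDecays_pow_apply_of_mem_maxGenEigenspace f hβ hy).map u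
    · have hzero (n : ℕ) : u ((f ^ n) y) = 0 :=
        hu β hβ _ (End.mapsTo_maxGenEigenspace_of_comm (Commute.self_pow f n) β hy)
      simpa only [hzero] using ExpDecays.zero
  · simpa only [map_add] using hy.add hz

lemma isGenEigvec_of_mem_maxGenEigenspace {d : ℕ} {A : Matrix (Fin d) (Fin d) ℂ} {β : ℂ}
    {v : Fin d → ℂ} (hv : v ∈ End.maxGenEigenspace (toLin' A) β) (hv0 : v ≠ 0) :
    IsGenEigvec A β v := by
  obtain ⟨k, hk⟩ := (End.mem_maxGenEigenspace (toLin' A) β v).1 hv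
  refine ⟨hv0, k + 1, Nat.le_add_left 1 k, ?_⟩
  have : toLin' ((A - β • 1) ^ (k + 1)) = (toLin' A - β • 1) * (toLin' A - β • 1) ^ k := by
    rw [toLin'_pow, map_sub, map_smul, toLin'_one, pow_succ']
    rfl
  rw [← toLin'_apply, this, End.mul_apply, hk, map_zero]

theorem stmt_5 {d : ℕ} (α : ℝ) (M : Matrix (Fin d) (Fin d) ℝ) (w : Fin d → ℝ)
    (h : ∀ (β : ℂ) (v : Fin d → ℂ), 1 ≤ ‖β‖ →
      IsGenEigvec (M.map (fun x : ℝ => (x : ℂ))) β v →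
      (∑ i, ((α : ℂ) - (w i : ℂ)) * v i) = 0) :
    ∃ C > 0, ∃ ρ : ℝ, 0 < ρ ∧ ρ < 1 ∧
      ∀ n : ℕ, ‖Matrix.vecMul (fun i => α - w i) (M ^ n)‖ ≤ C * ρ ^ n := by
  set Mc := M.map Complex.ofRealHom
  let u : (Fin d → ℂ) →L[ℂ] ℂ :=
    LinearMap.toContinuousLinearMap (dotProductBilin ℂ ℂ fun i => (α : ℂ) - w i)
  have hu (β : ℂ) (hβ : 1 ≤ ‖β‖) (y) (hy : y ∈ End.maxGenEigenspace (toLin' Mc) β) : u y = 0 := by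
    rcases eq_or_ne y 0 with rfl | hy0
    · exact map_zero u
    · exact h β y hβ (isGenEigvec_of_mem_maxGenEigenspace hy hy0)
  refine ExpDecays.pi fun j => ?_
  refine (expDecays_apply_pow_apply _ u hu (Pi.single j 1)).of_norm_le_mul 1 fun n => le_of_eq ?_
  rw [one_mul, ← toLin'_pow, toLin'_apply, mulVec_single_one, ← Matrix.map_pow, ← Complex.norm_real]
  simp [u, vecMul, dotProduct]
end

section
/- Let M be a d×d matrix with integer coefficients. If γ is an eigenvalue of M such that every generalized eigenvector of M associated to γ has coordinate sum zero, then for every algebraic conjugate β of γ that is also an eigenvalue of M, every generalized eigenvector of M associated to β has coordinate sum zero. -/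
open Matrix IntermediateField

section RowSpace

variable {m n K : Type*} [Fintype m] [Field K]

theorem Matrix.exists_vecMul_eq_iff_forall_mulVec_eq_zero [Fintype n] (A : Matrix m n K)
    (c : n → K) :
    (∃ w, w ᵥ* A = c) ↔ ∀ u, A *ᵥ u = 0 → c ⬝ᵥ u = 0 := by
  classical
  refine ⟨fun ⟨w, hw⟩ u hu => by rw [← hw, ← dotProduct_mulVec, hu, dotProduct_zero], fun h => ?_⟩
  have hc : dotProductEquiv K n c ∈ (LinearMap.ker A.mulVecLin).dualAnnihilator :=
    (Submodule.mem_dualAnnihilator _).2 fun u hu => h u hu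
  obtain ⟨ψ, hψ⟩ := (LinearMap.range_dualMap_eq_dualAnnihilator_ker A.mulVecLin).symm ▸ hc
  obtain ⟨w, rfl⟩ := (dotProductEquiv K m).surjective ψ
  refine ⟨w, (dotProductEquiv K n).injective (LinearMap.ext fun u => ?_)⟩
  rw [← hψ]
  simp [dotProduct_mulVec]

theorem Matrix.exists_vecMul_eq_of_exists_vecMul_map_eq {L : Type*} [Field L] [Algebra K L]
    (A : Matrix m n K) (c : n → K)
    (h : ∃ w : m → L, w ᵥ* A.map (algebraMap K L) = algebraMap K L ∘ c) :
    ∃ w, w ᵥ* A = c := by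
  obtain ⟨w, hw⟩ := h
  obtain ⟨π, hπ⟩ := (Algebra.linearMap K L).exists_leftInverse_of_injective
    (LinearMap.ker_eq_bot.2 (algebraMap K L).injective)
  refine ⟨π ∘ w, funext fun j => ?_⟩
  calc (π ∘ w ᵥ* A) j = π ((w ᵥ* A.map (algebraMap K L)) j) := by
        simp only [vecMul, dotProduct, map_apply, map_sum, Function.comp_apply]
        refine Finset.sum_congr rfl fun i _ => ?_
        rw [← Algebra.commutes, ← Algebra.smul_def, map_smul, smul_eq_mul, mul_comm]
    _ = c j := by rw [hw]; exact LinearMap.congr_fun hπ (c j)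

end RowSpace

theorem IntermediateField.exists_algHom_gen_eq_of_minpoly_eq {F E K : Type*} [Field F] [Field E]
    [Field K] [Algebra F E] [Algebra F K] {α : E} {β : K} (hα : IsIntegral F α)
    (h : minpoly F β = minpoly F α) : ∃ φ : F⟮α⟯ →ₐ[F] K, φ (AdjoinSimple.gen F α) = β :=
  ⟨(algHomAdjoinIntegralEquiv F hα).symm
      ⟨β, Polynomial.mem_aroots.2 ⟨minpoly.ne_zero hα, h ▸ minpoly.aeval F β⟩⟩,
    algHomAdjoinIntegralEquiv_symm_apply_gen _ _ _⟩

section ShiftedPow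

variable {n : Type*} [Fintype n] [DecidableEq n]

def Matrix.shiftedPow {R : Type*} [CommRing R] (M : Matrix n n ℤ) (x : R) (k : ℕ) :
    Matrix n n R :=
  (M.map (fun a : ℤ => (a : R)) - x • 1) ^ k

theorem Matrix.map_shiftedPow {R S : Type*} [CommRing R] [CommRing S] (f : R →+* S)
    (M : Matrix n n ℤ) (x : R) (k : ℕ) :
    (M.shiftedPow x k).map f = M.shiftedPow (f x) k := by
  have hbase : (M.map (fun a : ℤ => (a : R)) - x • 1).map f =
      M.map (fun a : ℤ => (a : S)) - f x • 1 := by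
    ext i j
    simp [Matrix.one_apply, apply_ite f]
  rw [shiftedPow, ← RingHom.mapMatrix_apply, map_pow, RingHom.mapMatrix_apply, hbase, shiftedPow]

theorem Matrix.exists_vecMul_shiftedPow_eq_one_map {R S : Type*} [CommRing R] [CommRing S]
    (f : R →+* S) {M : Matrix n n ℤ} {x : R} {k : ℕ}
    (h : ∃ w, w ᵥ* M.shiftedPow x k = 1) : ∃ w, w ᵥ* M.shiftedPow (f x) k = 1 := by
  obtain ⟨w, hw⟩ := h
  refine ⟨f ∘ w, funext fun j => ?_⟩
  rw [← map_shiftedPow, ← RingHom.map_vecMul, hw, Pi.one_apply, map_one, Pi.one_apply]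

theorem Matrix.exists_vecMul_shiftedPow_eq_one_of_algebraMap {K L : Type*} [Field K] [Field L]
    [Algebra K L] {M : Matrix n n ℤ} {x : K} {k : ℕ}
    (h : ∃ w, w ᵥ* M.shiftedPow (algebraMap K L x) k = 1) : ∃ w, w ᵥ* M.shiftedPow x k = 1 := by
  refine exists_vecMul_eq_of_exists_vecMul_map_eq (L := L) _ _ ?_
  rwa [map_shiftedPow, show algebraMap K L ∘ (1 : n → K) = 1 from funext fun _ => map_one _]

end ShiftedPow

theorem stmt_6_general {d : ℕ} (M : Matrix (Fin d) (Fin d) ℤ) (γ β : ℂ)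
    (halg : IsAlgebraic ℚ γ)
    (hconj : minpoly ℚ β = minpoly ℚ γ)
    (h : ∀ v : Fin d → ℂ, IsGenEigvec (M.map (fun x : ℤ => (x : ℂ))) γ v → ∑ i, v i = 0) :
    ∀ v : Fin d → ℂ, IsGenEigvec (M.map (fun x : ℤ => (x : ℂ))) β v → ∑ i, v i = 0 := by
  rintro v ⟨-, k, hk, hv⟩
  have hγ : ∃ w, w ᵥ* M.shiftedPow γ k = 1 := by
    refine (exists_vecMul_eq_iff_forall_mulVec_eq_zero _ _).2 fun u hu => ?_
    rw [one_dotProduct]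
    by_cases hu0 : u = 0
    · simp [hu0]
    · exact h u ⟨hu0, k, hk, hu⟩
  obtain ⟨φ, hφ⟩ := exists_algHom_gen_eq_of_minpoly_eq halg.isIntegral hconj
  have hgen := exists_vecMul_shiftedPow_eq_one_of_algebraMap (L := ℂ)
    ((AdjoinSimple.algebraMap_gen ℚ γ).symm ▸ hγ)
  have hβ := hφ ▸ exists_vecMul_shiftedPow_eq_one_map φ.toRingHom hgen
  rw [← one_dotProduct]
  exact (exists_vecMul_eq_iff_forall_mulVec_eq_zero _ _).1 hβ v hv

theorem stmt_6 {d : ℕ} (M : Matrix (Fin d) (Fin d) ℤ) (γ β : ℂ)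
    (hγeig : ∃ v : Fin d → ℂ, v ≠ 0 ∧ (M.map (fun x : ℤ => (x : ℂ))).mulVec v = γ • v)
    (halg : IsAlgebraic ℚ γ)
    (hconj : minpoly ℚ β = minpoly ℚ γ)
    (h : ∀ v : Fin d → ℂ, IsGenEigvec (M.map (fun x : ℤ => (x : ℂ))) γ v → ∑ i, v i = 0) :
    ∀ v : Fin d → ℂ, IsGenEigvec (M.map (fun x : ℤ => (x : ℂ))) β v → ∑ i, v i = 0 :=
  stmt_6_general M γ β halg hconj h
end

section
/- Let σ be a substitution on a finite alphabet A with incidence matrix M, and let u ∈ A^ℤ be a fixed point of σ (i.e., σ(u) = u with the natural indexing). Then for every a ∈ A, W_a(u) = ⋃ { M·W_b(u) + ab(p) : b ∈ A, p,s ∈ A* with σ(b) = p a s }. -/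
/-!
Since the coordinates of `abPrefix u n` sum to `n`, the vector `abPrefix u n` determines `n`;
hence `W_a(u)` is the set of `abPrefix u n` with `u n = a`. For a fixed point the positions of
`u` are cut into the consecutive blocks `σ(u k)`, starting at `L k`, and these blocks cover `ℤ`
because `σ` is non-erasing. A position `n = L k + j` inside the block of `k` has
`abPrefix u n = M · abPrefix u k + ab(p)` with `p` the prefix of length `j` of `σ(u k)`, and
`u n = a` exactly when `σ(u k) = p a s`.
-/

/-- Abelianization of `u_{[0,n)}` for a bi-infinite word `u : ℤ → A`, with the
convention `ab(u_{[0,n)}) = -ab(u_{[-n,0)})` for `n < 0`. -/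
def abPrefix {A : Type*} [DecidableEq A] (u : ℤ → A) (n : ℤ) : A → ℤ := fun a =>
  if 0 ≤ n then (((Finset.range n.toNat).filter (fun i : ℕ => u (i : ℤ) = a)).card : ℤ)
  else -((((Finset.range (-n).toNat).filter (fun i : ℕ => u (-((i : ℤ) + 1)) = a)).card : ℤ))

/-- `w` is the image of the bi-infinite word `u` under the substitution `σ`,
aligned so that `σ(u₀)` starts at position `0`. -/
def IsSubstImage {A : Type*} (σ : A → List A) (u w : ℤ → A) : Prop :=
  ∃ L : ℤ → ℤ, L 0 = 0 ∧ (∀ k : ℤ, L (k + 1) = L k + (σ (u k)).length) ∧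
    ∀ (k : ℤ) (j : ℕ) (hj : j < (σ (u k)).length), w (L k + j) = (σ (u k)).get ⟨j, hj⟩

theorem Int.funext_of_add_one_eq_add {G : Type*} [AddRightCancelSemigroup G] {f g d : ℤ → G}
    (hf : ∀ n, f (n + 1) = f n + d n) (hg : ∀ n, g (n + 1) = g n + d n) (h0 : f 0 = g 0) :
    f = g := by
  funext n
  induction n using Int.induction_on with
  | zero => exact h0
  | succ k ih => rw [hf, hg, ih]
  | pred k ih =>
    apply add_right_cancel (b := d (-k - 1))
    rw [← hf, ← hg, sub_add_cancel, ih]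

theorem Int.exists_apply_le_lt_apply_add_one {L : ℤ → ℤ} (hL : ∀ k, L k + 1 ≤ L (k + 1))
    (n : ℤ) : ∃ k, L k ≤ n ∧ n < L (k + 1) := by
  have hmono : Monotone fun k => L k - k :=
    monotone_int_of_le_succ fun k => by have := hL k; omega
  have hbdd : ∃ b, ∀ k, L k ≤ n → k ≤ b := by
    refine ⟨max (n - L 0) 0, fun k hk => ?_⟩
    rcases le_or_gt 0 k with h | h
    · have := hmono h; simp only at this; omega
    · omega
  have hne : ∃ k, L k ≤ n := by
    refine ⟨min (n - L 0) 0, ?_⟩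
    have := hmono (min_le_right (n - L 0) 0); simp only at this; omega
  obtain ⟨k, hk, hmax⟩ := Int.exists_greatest_of_bdd hbdd hne
  exact ⟨k, hk, not_le.mp fun h => by have := hmax _ h; omega⟩

section Abelianization
variable {A : Type*} [DecidableEq A]

/-- The abelianization `ab(l)` of a finite word. -/
def parikh (l : List A) : A → ℤ := fun c => l.count c

@[simp] theorem parikh_nil : parikh ([] : List A) = 0 := rfl

theorem parikh_append (l₁ l₂ : List A) : parikh (l₁ ++ l₂) = parikh l₁ + parikh l₂ := by
  funext c; simp [parikh]

theorem parikh_singleton (a : A) : parikh [a] = Pi.single a 1 := by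
  funext c
  by_cases h : c = a
  · subst h; simp [parikh]
  · simp [parikh, h, Ne.symm h]

theorem abPrefix_natCast (u : ℤ → A) (m : ℕ) (c : A) :
    abPrefix u m c = Nat.count (fun i => u i = c) m := by
  simp [abPrefix, Nat.count_eq_card_filter_range]

theorem abPrefix_neg_natCast (u : ℤ → A) (m : ℕ) (c : A) :
    abPrefix u (-m) c = -Nat.count (fun i => u (-(i + 1)) = c) m := by
  rcases m with _ | m
  · simp [abPrefix]
  · simp [abPrefix, Nat.count_eq_card_filter_range]; omega

theorem abPrefix_zero (u : ℤ → A) : abPrefix u 0 = 0 := by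
  funext c; simp [abPrefix]

theorem abPrefix_add_one (u : ℤ → A) (n : ℤ) :
    abPrefix u (n + 1) = abPrefix u n + Pi.single (u n) 1 := by
  funext c
  rw [Pi.add_apply, Pi.single_apply]
  rcases n with m | m
  · have := abPrefix_natCast u (m + 1) c
    push_cast at this
    rw [Int.ofNat_eq_natCast, this, abPrefix_natCast, Nat.count_succ]
    by_cases h : c = u m <;> simp [h, Ne.symm]
  · have hsucc : Int.negSucc m = -((m + 1 : ℕ) : ℤ) := rfl
    have hadd : Int.negSucc m + 1 = -(m : ℤ) := by omega
    rw [hadd, hsucc, abPrefix_neg_natCast, abPrefix_neg_natCast, Nat.count_succ]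
    push_cast
    by_cases h : c = u (-(m + 1))
    · simp only [h, if_true]; omega
    · simp only [h, Ne.symm h, if_false]; omega

theorem sum_abPrefix [Fintype A] (u : ℤ → A) (n : ℤ) : ∑ c, abPrefix u n c = n := by
  have := Int.funext_of_add_one_eq_add (f := fun n => ∑ c, abPrefix u n c) (g := id) (d := 1)
    (fun n => by simp [abPrefix_add_one, Finset.sum_add_distrib]) (fun _ => rfl)
    (by simp [abPrefix_zero])
  exact congrFun this n

theorem setOf_abPrefix_add_single_eq_image [Fintype A] (u : ℤ → A) (a : A) :
    {x ∈ Set.range (abPrefix u) | x + Pi.single a 1 ∈ Set.range (abPrefix u)} =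
      abPrefix u '' {n | u n = a} := by
  ext x
  constructor
  · rintro ⟨⟨n, rfl⟩, m, hm⟩
    have hmn : m = n + 1 := by
      have := congrArg (fun x => ∑ c, x c) hm
      simpa [sum_abPrefix, Finset.sum_add_distrib] using this
    subst hmn
    rw [abPrefix_add_one] at hm
    have := congrFun (add_left_cancel hm) a
    refine ⟨n, ?_, rfl⟩
    simpa [Pi.single_apply, eq_comm] using this
  · rintro ⟨n, rfl, rfl⟩
    exact ⟨⟨n, rfl⟩, n + 1, abPrefix_add_one u n⟩

theorem abPrefix_add_of_getElem (u : ℤ → A) (m : ℤ) (w : List A)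
    (hw : ∀ (i : ℕ) (hi : i < w.length), u (m + i) = w[i]) {j : ℕ} (hj : j ≤ w.length) :
    abPrefix u (m + j) = abPrefix u m + parikh (w.take j) := by
  induction j with
  | zero => simp
  | succ j ih =>
    rw [Nat.cast_succ, ← add_assoc, abPrefix_add_one, ih (by omega), hw j (by omega),
      List.take_succ_eq_append_getElem (by omega), parikh_append, parikh_singleton, add_assoc]

end Abelianization

section Substitution
open scoped Matrix

variable {A : Type*} [DecidableEq A]

def incidenceMatrix (σ : A → List A) : Matrix A A ℤ := Matrix.of fun c b => ((σ b).count c : ℤ)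

variable [Fintype A] {σ : A → List A} {u w : ℤ → A} {L : ℤ → ℤ}

theorem abPrefix_substImage (hL0 : L 0 = 0) (hL : ∀ k, L (k + 1) = L k + (σ (u k)).length)
    (hw : ∀ (k : ℤ) (j : ℕ) (hj : j < (σ (u k)).length), w (L k + j) = (σ (u k)).get ⟨j, hj⟩)
    (k : ℤ) : abPrefix w (L k) = incidenceMatrix σ *ᵥ abPrefix u k := by
  refine congrFun (Int.funext_of_add_one_eq_add (f := fun k => abPrefix w (L k))
    (g := fun k => incidenceMatrix σ *ᵥ abPrefix u k) (d := fun k => parikh (σ (u k)))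
    (fun n => ?_) (fun n => ?_) ?_) k
  · rw [hL, abPrefix_add_of_getElem w (L n) (σ (u n)) (hw n) le_rfl, List.take_length]
  · rw [abPrefix_add_one, Matrix.mulVec_add, Matrix.mulVec_single_one]
    rfl
  · simp [hL0, abPrefix_zero]

theorem abPrefix_substImage_add (hL0 : L 0 = 0) (hL : ∀ k, L (k + 1) = L k + (σ (u k)).length)
    (hw : ∀ (k : ℤ) (j : ℕ) (hj : j < (σ (u k)).length), w (L k + j) = (σ (u k)).get ⟨j, hj⟩)
    (k : ℤ) {j : ℕ} (hj : j ≤ (σ (u k)).length) :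
    abPrefix w (L k + j) = incidenceMatrix σ *ᵥ abPrefix u k + parikh ((σ (u k)).take j) := by
  rw [abPrefix_add_of_getElem w (L k) (σ (u k)) (hw k) hj, abPrefix_substImage hL0 hL hw]

theorem IsSubstImage.image_abPrefix_eq_iUnion (hσ : ∀ a, σ a ≠ []) (hfix : IsSubstImage σ u u)
    (a : A) : abPrefix u '' {n | u n = a} =
      ⋃ (b : A) (p : List A) (s : List A) (_ : σ b = p ++ a :: s),
        (fun x => incidenceMatrix σ *ᵥ x + parikh p) '' (abPrefix u '' {n | u n = b}) := by
  obtain ⟨L, hL0, hL, hLu⟩ := hfix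
  ext x
  simp only [Set.mem_iUnion, Set.mem_image, Set.mem_ofPred_eq]
  constructor
  · rintro ⟨n, rfl, rfl⟩
    have hstep : ∀ k, L k + 1 ≤ L (k + 1) := fun k => by
      have := List.length_pos_iff.mpr (hσ (u k)); rw [hL]; omega
    obtain ⟨k, hkn, hnk⟩ := Int.exists_apply_le_lt_apply_add_one hstep n
    obtain ⟨j, rfl⟩ : ∃ j : ℕ, n = L k + j := ⟨(n - L k).toNat, by omega⟩
    have hj : j < (σ (u k)).length := by rw [hL] at hnk; omega
    have hsplit : σ (u k) = (σ (u k)).take j ++ u (L k + j) :: (σ (u k)).drop (j + 1) := by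
      rw [hLu k j hj, List.get_eq_getElem, ← List.drop_eq_getElem_cons hj, List.take_append_drop]
    exact ⟨u k, _, _, hsplit, abPrefix u k, ⟨k, rfl, rfl⟩,
      (abPrefix_substImage_add hL0 hL hLu k hj.le).symm⟩
  · rintro ⟨_, p, s, hb, _, ⟨k, rfl, rfl⟩, rfl⟩
    have hj : p.length < (σ (u k)).length := by simp [hb]
    refine ⟨L k + p.length, ?_, ?_⟩
    · rw [hLu k _ hj]
      simp [hb]
    · rw [abPrefix_substImage_add hL0 hL hLu k hj.le, hb, List.take_left' rfl]

end Substitution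

theorem stmt_10 {A : Type*} [Fintype A] [DecidableEq A] (σ : A → List A)
    (hσ : ∀ a, σ a ≠ []) (u : ℤ → A) (hfix : IsSubstImage σ u u) (a : A) :
    {x ∈ Set.range (abPrefix u) | x + Pi.single a 1 ∈ Set.range (abPrefix u)} =
      ⋃ (b : A) (p : List A) (s : List A) (_ : σ b = p ++ a :: s),
        (fun x : A → ℤ => fun c => (∑ b', ((σ b').count c : ℤ) * x b') + (p.count c : ℤ)) ''
          {x ∈ Set.range (abPrefix u) | x + Pi.single b 1 ∈ Set.range (abPrefix u)} := by
  simp only [setOf_abPrefix_add_single_eq_image]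
  exact hfix.image_abPrefix_eq_iUnion hσ a
end

section
/- Let Λ ⊂ ℝ^m be a lattice (a discrete cocompact subgroup), let P ⊂ ℝ^m be a hyperplane, let D > 0, and set T_D = { x ∈ Λ : dist(x, P) ≤ D }. Let V : ℝ^m → ℝ^d be a surjective linear map with d = m − 1 whose kernel is a line L with L ⊕ P = ℝ^m and L ∩ (Λ ⊗ ℚ span considered rationally) totally irrational in the sense that V is injective on Λ. Then V(T_D) is ε-separated for some ε > 0: any two distinct points of V(T_D) are at distance > ε. -/
/-!
Differences of points of `T_D` lie in `T_{2D}`, since the distance to `P` is the quotient norm on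
`E ⧸ P` and hence subadditive. As `ker V ∩ P = 0`, the linear map `z ↦ (z mod P, V z)` is
injective on the finite-dimensional space `E`, hence antilipschitz; so the points of `T_{2D}`
whose image under `V` has norm at most `1` form a bounded, hence finite, subset of the discrete
group `Λ`. Their nonzero images keep a positive distance from `0`, and that distance separates
`V(T_D)`.
-/

open Bornology Metric Pointwise

theorem AddSubgroup.infDist_sub_le {E : Type*} [SeminormedAddCommGroup E] (S : AddSubgroup E)
    (a c : E) : infDist (a - c) S ≤ infDist a S + infDist c S := by
  have := norm_sub_le (a : E ⧸ S) (c : E ⧸ S)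
  rwa [← QuotientAddGroup.mk_sub, QuotientAddGroup.norm_mk, QuotientAddGroup.norm_mk,
    QuotientAddGroup.norm_mk] at this

def slab {E : Type*} [PseudoMetricSpace E] (Λ P : Set E) (D : ℝ) : Set E :=
  {z | z ∈ Λ ∧ infDist z P ≤ D}

theorem Set.exists_pos_lt_dist_of_finite_sub_inter_closedBall {F : Type*}
    [NormedAddCommGroup F] {S : Set F} (h : ((S - S) ∩ closedBall 0 1).Finite) :
    ∃ ε > 0, ∀ x ∈ S, ∀ y ∈ S, x ≠ y → ε < dist x y := by
  set N := ((S - S) ∩ closedBall 0 1) \ {0}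
  have hN : Nᶜ ∈ nhds (0 : F) :=
    h.sdiff.isClosed.isOpen_compl.mem_nhds fun h0 => h0.2 rfl
  obtain ⟨ε, hε, hεN⟩ := nhds_basis_closedBall.mem_iff.1 hN
  refine ⟨min ε 1, lt_min hε one_pos, fun x hx y hy hxy => ?_⟩
  by_contra! hle
  rw [dist_eq_norm] at hle
  refine hεN (by simpa using hle.trans (min_le_left _ _)) ⟨⟨Set.sub_mem_sub hx hy, ?_⟩, ?_⟩
  · simpa using hle.trans (min_le_right _ _)
  · simpa [sub_eq_zero] using hxy

section

variable {E F : Type*} [NormedAddCommGroup E] [NormedSpace ℝ E] [FiniteDimensional ℝ E]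
  [NormedAddCommGroup F] [NormedSpace ℝ F] {P : Submodule ℝ E} {V : E →ₗ[ℝ] F}

theorem isBounded_setOf_infDist_le_and_norm_le (hPV : LinearMap.ker V ⊓ P = ⊥) (R r : ℝ) :
    IsBounded {z | infDist z P ≤ R ∧ ‖V z‖ ≤ r} := by
  -- makes `E ⧸ P` a normed, not merely seminormed, group
  have : IsClosed (P : Set E) := P.closed_of_finiteDimensional
  have hker : LinearMap.ker (P.mkQ.prod V) = ⊥ := by
    rw [LinearMap.ker_prod, Submodule.ker_mkQ, inf_comm, hPV]
  obtain ⟨K, -, hK⟩ := (P.mkQ.prod V).exists_antilipschitzWith hker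
  refine (hK.isBounded_preimage (isBounded_closedBall (x := 0) (r := max R r))).subset ?_
  rintro z ⟨hzP, hzV⟩
  simp only [Set.mem_preimage, mem_closedBall, dist_zero_right, Prod.norm_def,
    LinearMap.prod_apply, Function.prod]
  exact max_le_max ((QuotientAddGroup.norm_mk (S := P.toAddSubgroup) z).trans_le hzP) hzV

theorem finite_image_slab_inter_closedBall (Λ : AddSubgroup E) [DiscreteTopology Λ]
    (hPV : LinearMap.ker V ⊓ P = ⊥) (R r : ℝ) :
    (V '' slab Λ P R ∩ closedBall 0 r).Finite := by
  have hfin := finite_isBounded_inter_isClosed DiscreteTopology.isDiscrete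
    (isBounded_setOf_infDist_le_and_norm_le hPV R r) Λ.isClosed_of_discrete
  refine (hfin.image V).subset ?_
  rintro _ ⟨⟨z, ⟨hzΛ, hzP⟩, rfl⟩, hzV⟩
  exact ⟨z, ⟨⟨hzP, by simpa using hzV⟩, hzΛ⟩, rfl⟩

theorem exists_pos_lt_dist_image_slab (Λ : AddSubgroup E) [DiscreteTopology Λ]
    (hPV : LinearMap.ker V ⊓ P = ⊥) (D : ℝ) :
    ∃ ε > 0, ∀ x ∈ V '' slab Λ P D, ∀ y ∈ V '' slab Λ P D, x ≠ y → ε < dist x y := by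
  have hsub : V '' slab Λ P D - V '' slab Λ P D ⊆ V '' slab Λ P (2 * D) := by
    rintro _ ⟨_, ⟨z₁, ⟨hz₁Λ, hz₁P⟩, rfl⟩, _, ⟨z₂, ⟨hz₂Λ, hz₂P⟩, rfl⟩, rfl⟩
    refine ⟨z₁ - z₂, ⟨Λ.sub_mem hz₁Λ hz₂Λ, ?_⟩, map_sub V z₁ z₂⟩
    calc infDist (z₁ - z₂) P ≤ infDist z₁ P + infDist z₂ P :=
          P.toAddSubgroup.infDist_sub_le z₁ z₂
      _ ≤ 2 * D := by linarith
  exact Set.exists_pos_lt_dist_of_finite_sub_inter_closedBall <|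
    (finite_image_slab_inter_closedBall Λ hPV (2 * D) 1).subset
      (Set.inter_subset_inter_left _ hsub)

end

theorem stmt_12_general {m : ℕ} (b : Module.Basis (Fin m) ℝ (Fin m → ℝ))
    (P : Submodule ℝ (Fin m → ℝ))
    (V : (Fin m → ℝ) →ₗ[ℝ] (Fin (m - 1) → ℝ))
    (hinf : LinearMap.ker V ⊓ P = ⊥)
    (D : ℝ) :
    ∃ ε > 0,
      ∀ x ∈ V '' {z : Fin m → ℝ | z ∈ Submodule.span ℤ (Set.range b) ∧
            Metric.infDist z (P : Set (Fin m → ℝ)) ≤ D},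
        ∀ y ∈ V '' {z : Fin m → ℝ | z ∈ Submodule.span ℤ (Set.range b) ∧
            Metric.infDist z (P : Set (Fin m → ℝ)) ≤ D},
          x ≠ y → ε < dist x y :=
  exists_pos_lt_dist_image_slab (Submodule.span ℤ (Set.range b)).toAddSubgroup hinf D

theorem stmt_12 {m : ℕ} (b : Module.Basis (Fin m) ℝ (Fin m → ℝ))
    (P : Submodule ℝ (Fin m → ℝ)) (hP : Module.finrank ℝ P = m - 1)
    (V : (Fin m → ℝ) →ₗ[ℝ] (Fin (m - 1) → ℝ)) (hVsurj : Function.Surjective V)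
    (hsup : LinearMap.ker V ⊔ P = ⊤) (hinf : LinearMap.ker V ⊓ P = ⊥)
    (hinjΛ : Set.InjOn V ((Submodule.span ℤ (Set.range b) : Submodule ℤ (Fin m → ℝ)) : Set (Fin m → ℝ)))
    (D : ℝ) (hD : 0 < D) :
    ∃ ε > 0,
      ∀ x ∈ V '' {z : Fin m → ℝ | z ∈ Submodule.span ℤ (Set.range b) ∧
            Metric.infDist z (P : Set (Fin m → ℝ)) ≤ D},
        ∀ y ∈ V '' {z : Fin m → ℝ | z ∈ Submodule.span ℤ (Set.range b) ∧
            Metric.infDist z (P : Set (Fin m → ℝ)) ≤ D},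
          x ≠ y → ε < dist x y :=
  stmt_12_general b P V hinf D
end

section
/- Let σ be a primitive aperiodic substitution with incidence matrix M over a finite alphabet A, u an admissible fixed point of σ, and V : ℝ^A → ℝ^d a linear map such that Σ_{n≥0} ‖V Mⁿ‖ < ∞. Then for every v in the subshift Ω_σ, φ(v) = Σ_{n=0}^∞ V Mⁿ t_n(v), where (t_n(v)) is the sequence of abelianized prefixes of v in the Dumont–Thomas (prefix-suffix) decomposition, and φ = φ_{u,V} is the continuous extension of Sⁿu ↦ V·ab(u_{[0,n)}). -/
/-- The incidence matrix of a substitution, acting on `A → ℝ`. -/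
noncomputable def incMat {A : Type*} [Fintype A] [DecidableEq A] (σ : A → List A) :
    Matrix A A ℝ :=
  Matrix.of fun c b => ((σ b).count c : ℝ)

/-!
Peeling off the prefixes `p 0, …, p (N - 1)` of the prefix-suffix decomposition of `v` shows,
by the cocycle identity `φ (S^c w) = φ w + V ab(w_{[0,c)})`, that `φ v - ∑_{n<N} V Mⁿ tₙ` is
`φ w_N` for a point `w_N` of `Ω` that is a `σ^N`-image aligned at `0`. Such a point is a limit of
points `S^{L(k)} u`, where `φ` takes the value `V M^N ab(u_{[0,k)})`. Expanding `ab(u_{[0,k)})`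
in Dumont–Thomas digits bounds this value by `C ∑_{j ≥ N} ‖V Mʲ‖`, which tends to `0`.
-/

lemma Int.apply_eq_of_increment_eq {G : Type*} [AddGroup G] {f g δ δ' : ℤ → G}
    (hf : ∀ k, f (k + 1) = f k + δ k) (hg : ∀ k, g (k + 1) = g k + δ' k) (h0 : f 0 = g 0)
    {k : ℤ} (hδ : ∀ t, |t| ≤ |k| → δ t = δ' t) : f k = g k := by
  induction k using Int.induction_on with
  | zero => exact h0
  | succ n ih =>
    rw [hf, hg, ih fun t ht => hδ t (by simp only [Int.abs_eq_natAbs] at *; omega),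
      hδ n (by simp only [Int.abs_eq_natAbs]; omega)]
  | pred n ih =>
    have hfn := hf (-n - 1)
    have hgn := hg (-n - 1)
    rw [sub_add_cancel] at hfn hgn
    rw [eq_sub_of_add_eq hfn.symm, eq_sub_of_add_eq hgn.symm,
      ih fun t ht => hδ t (by simp only [Int.abs_eq_natAbs] at *; omega), hδ (-n - 1) le_rfl]

lemma Int.exists_abs_le_and_le_and_lt_succ {L : ℤ → ℤ} (h0 : L 0 = 0)
    (hL : ∀ k, L k < L (k + 1)) (i : ℤ) : ∃ k, |k| ≤ |i| ∧ L k ≤ i ∧ i < L (k + 1) := by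
  have hpos : ∀ k, 0 ≤ k → k ≤ L k := fun k hk => by
    induction k, hk using Int.leInduction with
    | base => omega
    | succ k _ ih => linarith [hL k]
  have hneg : ∀ k ≤ 0, L k ≤ k := fun k hk => by
    induction k, hk using Int.leInductionDown with
    | base => omega
    | pred k _ ih =>
      have := hL (k - 1)
      rw [sub_add_cancel] at this
      omega
  have hmin : L (min i 0) ≤ i := (hneg _ (min_le_right i 0)).trans (min_le_left i 0)
  obtain ⟨k, hk, hmax⟩ := Int.exists_greatest_of_bdd (P := fun k => L k ≤ i)
    ⟨max i 0, fun k hk => by by_contra! hlt; linarith [hpos k (by omega), le_max_left i 0]⟩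
    ⟨min i 0, hmin⟩
  have hlt : i < L (k + 1) := by by_contra! hle; linarith [hmax _ hle]
  have hlo : min i 0 ≤ k := hmax _ hmin
  have hhi : k ≤ max i 0 := by
    rcases le_or_gt k 0 with hk0 | hk0
    · exact hk0.trans (le_max_right i 0)
    · exact (hpos k hk0.le).trans hk |>.trans (le_max_left i 0)
  refine ⟨k, ?_, hk, hlt⟩
  simp only [Int.abs_eq_natAbs, Nat.cast_le]
  omega

section Series

open Filter Topology

variable {E F : Type*} [SeminormedAddCommGroup E] [NormedSpace ℝ E] [SeminormedAddCommGroup F]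
  [NormedSpace ℝ F] (Φ : ℕ → E →L[ℝ] F) (T : E → E) {S : Set E} {R C : ℝ}

lemma norm_apply_le_of_forall_exists_eq_add (hΦ : ∀ n a, Φ (n + 1) a = Φ n (T a))
    (hR : ∀ a ∈ S, ‖a‖ ≤ R) (hS : ∀ a ∈ S, ∃ b ∈ S, ∃ c, ‖c‖ ≤ C ∧ a = T b + c) (J : ℕ) :
    ∀ N, ∀ a ∈ S, ‖Φ N a‖ ≤ C * ∑ j ∈ Finset.range J, ‖Φ (j + N)‖ + ‖Φ (J + N)‖ * R := by
  induction J with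
  | zero =>
    intro N a ha
    simpa [mul_comm] using (Φ N).le_of_opNorm_le_of_le le_rfl (hR a ha)
  | succ J ih =>
    intro N a ha
    obtain ⟨b, hb, c, hc, rfl⟩ := hS a ha
    have hsum : ∑ j ∈ Finset.range (J + 1), ‖Φ (j + N)‖
        = ∑ j ∈ Finset.range J, ‖Φ (j + (N + 1))‖ + ‖Φ N‖ := by
      rw [Finset.sum_range_succ']; simp only [zero_add, add_right_comm _ 1 N, add_assoc]
    calc ‖Φ N (T b + c)‖ ≤ ‖Φ (N + 1) b‖ + ‖Φ N‖ * C := by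
          rw [map_add, ← hΦ]
          exact norm_add_le_of_le le_rfl ((Φ N).le_of_opNorm_le_of_le le_rfl hc)
      _ ≤ C * ∑ j ∈ Finset.range J, ‖Φ (j + (N + 1))‖ + ‖Φ (J + (N + 1))‖ * R + ‖Φ N‖ * C := by
          gcongr; exact ih (N + 1) b hb
      _ = _ := by rw [hsum, add_right_comm J 1 N, add_assoc J N 1]; ring

/-- Since `‖Φ (J + N)‖ → 0`, the digit expansion may be iterated indefinitely: no contraction
property of `T` is needed. -/
lemma norm_apply_le_tsum_of_forall_exists_eq_add (hΦ : ∀ n a, Φ (n + 1) a = Φ n (T a))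
    (hsum : Summable fun n => ‖Φ n‖) (hR : ∀ a ∈ S, ‖a‖ ≤ R)
    (hS : ∀ a ∈ S, ∃ b ∈ S, ∃ c, ‖c‖ ≤ C ∧ a = T b + c) (N : ℕ) {a : E} (ha : a ∈ S) :
    ‖Φ N a‖ ≤ C * ∑' j, ‖Φ (j + N)‖ := by
  have hlim : Tendsto (fun J => C * ∑ j ∈ Finset.range J, ‖Φ (j + N)‖ + ‖Φ (J + N)‖ * R) atTop
      (𝓝 (C * ∑' j, ‖Φ (j + N)‖ + 0 * R)) :=
    (((summable_nat_add_iff N).2 hsum).hasSum.tendsto_sum_nat.const_mul C).add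
      ((hsum.tendsto_atTop_zero.comp (tendsto_add_atTop_nat N)).mul_const R)
  rw [zero_mul, add_zero] at hlim
  exact ge_of_tendsto' hlim fun J => norm_apply_le_of_forall_exists_eq_add Φ T hΦ hR hS J N a ha

end Series

open Filter Topology in
lemma tsum_eq_of_norm_sub_sum_le {F : Type*} [NormedAddCommGroup F] {f : ℕ → F} {a : F}
    {ε : ℕ → ℝ} (hf : Summable f) (h : ∀ N, ‖a - ∑ n ∈ Finset.range N, f n‖ ≤ ε N)
    (hε : Tendsto ε atTop (𝓝 0)) : ∑' n, f n = a := by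
  refine (hf.hasSum_iff_tendsto_nat.2 ?_).tsum_eq
  rw [tendsto_iff_norm_sub_tendsto_zero]
  exact squeeze_zero (fun _ => norm_nonneg _) (fun N => (norm_sub_rev _ _).trans_le (h N)) hε

namespace Substitution

open Filter Topology Matrix

variable {A : Type*}

def shift (u : ℤ → A) (c : ℤ) : ℤ → A := fun i => u (i + c)

@[simp] lemma shift_zero (u : ℤ → A) : shift u 0 = u := by
  funext i; simp only [shift, add_zero]

lemma shift_shift (u : ℤ → A) (a b : ℤ) : shift (shift u a) b = shift u (b + a) := by
  funext i; simp only [shift, add_assoc]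

lemma shift_mem {Ω : Set (ℤ → A)} (hinv : (fun x : ℤ → A => fun i => x (i + 1)) '' Ω = Ω)
    {z : ℤ → A} (hz : z ∈ Ω) (c : ℤ) : shift z c ∈ Ω := by
  have hsucc : ∀ z ∈ Ω, shift z 1 ∈ Ω := fun z hz => hinv ▸ ⟨z, hz, rfl⟩
  have hpred : ∀ z ∈ Ω, shift z (-1) ∈ Ω := fun z hz => by
    obtain ⟨y, hy, rfl⟩ := hinv ▸ hz
    convert hy using 1
    funext i
    simp [shift]
  induction c using Int.induction_on generalizing z with
  | zero => rwa [shift_zero]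
  | succ n ih => rw [← shift_shift]; exact ih (hsucc z hz)
  | pred n ih => rw [sub_eq_add_neg, ← shift_shift]; exact ih (hpred z hz)

def ReadsAt (w : ℤ → A) (i : ℤ) (l : List A) : Prop :=
  ∀ (j : ℕ) (hj : j < l.length), w (i + j) = l[j]

lemma readsAt_cons {w : ℤ → A} {i : ℤ} {a : A} {l : List A} :
    ReadsAt w i (a :: l) ↔ w i = a ∧ ReadsAt w (i + 1) l := by
  refine ⟨fun h => ⟨?_, fun j hj => ?_⟩, fun ⟨ha, hl⟩ j hj => ?_⟩
  · have : w (i + (0 : ℕ)) = a := h 0 (by simp)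
    simpa using this
  · have : w (i + (j + 1 : ℕ)) = l[j] := h (j + 1) (by simpa using hj)
    rwa [Nat.cast_succ, ← add_assoc, add_right_comm] at this
  · rcases j with _ | j
    · simpa using ha
    · simpa [add_assoc, add_comm (1 : ℤ)] using hl j (by simpa using hj)

lemma readsAt_append {w : ℤ → A} {i : ℤ} {l₁ l₂ : List A} :
    ReadsAt w i (l₁ ++ l₂) ↔ ReadsAt w i l₁ ∧ ReadsAt w (i + l₁.length) l₂ := by
  induction l₁ generalizing i with
  | nil => simp [ReadsAt]
  | cons a l ih =>
    simp only [List.cons_append, readsAt_cons, ih, List.length_cons, Nat.cast_succ, and_assoc]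
    rw [add_comm (l.length : ℤ), add_assoc]

lemma ReadsAt.of_isPrefix {w : ℤ → A} {i : ℤ} {l q : List A} (h : ReadsAt w i l)
    (hq : q <+: l) : ReadsAt w i q := by
  obtain ⟨t, rfl⟩ := hq
  exact (readsAt_append.1 h).1

lemma readsAt_shift {w : ℤ → A} {c i : ℤ} {l : List A} :
    ReadsAt (shift w c) i l ↔ ReadsAt w (i + c) l := by
  simp only [ReadsAt, shift, add_right_comm i]

/-- `IsSubstImage θ z w` with the cutting points made explicit: the block `θ (z k)` of `w`
starts at `L k`. -/
structure IsSubstImageWith (θ : A → List A) (z w : ℤ → A) (L : ℤ → ℤ) : Prop where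
  zero : L 0 = 0
  add_one : ∀ k, L (k + 1) = L k + (θ (z k)).length
  readsAt : ∀ k, ReadsAt w (L k) (θ (z k))

lemma isSubstImage_iff {σ : A → List A} {z w : ℤ → A} :
    IsSubstImage σ z w ↔ ∃ L, IsSubstImageWith σ z w L :=
  ⟨fun ⟨L, h0, h1, h2⟩ => ⟨L, h0, h1, h2⟩, fun ⟨L, h⟩ => ⟨L, h.zero, h.add_one, h.readsAt⟩⟩

lemma isSubstImageWith_singleton (z : ℤ → A) : IsSubstImageWith (fun a => [a]) z z id :=
  ⟨rfl, fun _ => rfl, fun _ => readsAt_cons.2 ⟨by simp, by simp [ReadsAt]⟩⟩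

namespace IsSubstImageWith

variable {θ σ : A → List A} {z y w : ℤ → A} {L : ℤ → ℤ}

lemma shift (h : IsSubstImageWith θ z w L) (c : ℤ) :
    IsSubstImageWith θ (shift z c) (shift w (L c)) (fun k => L (k + c) - L c) where
  zero := by simp
  add_one k := by rw [add_right_comm, h.add_one]; simp only [Substitution.shift]; ring
  readsAt k := readsAt_shift.2 (by simpa [Substitution.shift] using h.readsAt (k + c))

lemma readsAt_flatMap (h : IsSubstImageWith θ y w L) {i : ℤ} {l : List A} (hl : ReadsAt y i l) :
    L (i + l.length) = L i + (l.flatMap θ).length ∧ ReadsAt w (L i) (l.flatMap θ) := by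
  induction l generalizing i with
  | nil => simp [ReadsAt]
  | cons a l ih =>
    obtain ⟨rfl, hl'⟩ := readsAt_cons.1 hl
    obtain ⟨hlen, hreads⟩ := ih hl'
    rw [List.length_cons, Nat.cast_succ, add_comm _ (1 : ℤ), ← add_assoc, hlen, h.add_one,
      List.flatMap_cons, readsAt_append, List.length_append, Nat.cast_add, add_assoc, ← h.add_one]
    exact ⟨rfl, h.readsAt i, hreads⟩

lemma comp {L₁ L₂ : ℤ → ℤ} (h₁ : IsSubstImageWith σ z y L₁) (h₂ : IsSubstImageWith θ y w L₂) :
    IsSubstImageWith (fun a => (σ a).flatMap θ) z w (L₂ ∘ L₁) where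
  zero := by simp [h₁.zero, h₂.zero]
  add_one k := by simp only [Function.comp, h₁.add_one, (h₂.readsAt_flatMap (h₁.readsAt k)).1]
  readsAt k := (h₂.readsAt_flatMap (h₁.readsAt k)).2

lemma lt_add_one (h : IsSubstImageWith θ z w L) (hθ : ∀ a, θ a ≠ []) (k : ℤ) :
    L k < L (k + 1) := by
  rw [h.add_one]
  have := List.length_pos_iff.2 (hθ (z k))
  omega

lemma exists_block (h : IsSubstImageWith θ z w L) (hθ : ∀ a, θ a ≠ []) (i : ℤ) :
    ∃ k, |k| ≤ |i| ∧ L k ≤ i ∧ i < L (k + 1) :=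
  Int.exists_abs_le_and_le_and_lt_succ h.zero (h.lt_add_one hθ) i

lemma apply_eq {z' w' : ℤ → A} {L' : ℤ → ℤ} (h : IsSubstImageWith θ z w L)
    (h' : IsSubstImageWith θ z' w' L') (hθ : ∀ a, θ a ≠ []) {i : ℤ}
    (hz : ∀ t, |t| ≤ |i| → z t = z' t) : w i = w' i := by
  obtain ⟨k, hki, hk, hk1⟩ := h.exists_block hθ i
  have hL : L k = L' k :=
    Int.apply_eq_of_increment_eq h.add_one h'.add_one (by rw [h.zero, h'.zero])
      fun t ht => by rw [hz t (ht.trans hki)]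
  have hzk : z k = z' k := hz k hki
  obtain ⟨n, hn, rfl⟩ : ∃ n : ℕ, n < (θ (z k)).length ∧ i = L k + n :=
    ⟨(i - L k).toNat, by rw [h.add_one] at hk1; omega, by omega⟩
  rw [h.readsAt k n hn, hL, h'.readsAt k n (hzk ▸ hn)]
  simp only [hzk]

end IsSubstImageWith

def substPow (σ : A → List A) : ℕ → A → List A
  | 0 => fun a => [a]
  | N + 1 => fun a => (σ a).flatMap (substPow σ N)

lemma substPow_ne_nil {σ : A → List A} (hσ : ∀ a, σ a ≠ []) (N : ℕ) (a : A) :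
    substPow σ N a ≠ [] := by
  induction N generalizing a with
  | zero => simp [substPow]
  | succ N ih =>
    obtain ⟨b, t, hbt⟩ := List.exists_cons_of_ne_nil (hσ a)
    simp [substPow, hbt, ih b]

lemma IsSubstImageWith.substPow {σ : A → List A} {u : ℤ → A} {L : ℤ → ℤ}
    (h : IsSubstImageWith σ u u L) (N : ℕ) : IsSubstImageWith (substPow σ N) u u L^[N] := by
  induction N with
  | zero => exact isSubstImageWith_singleton u
  | succ N ih => rw [Function.iterate_succ]; exact h.comp ih

section Abelianization

variable [DecidableEq A]

lemma abPrefix_natCast (u : ℤ → A) (n : ℕ) (a : A) :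
    abPrefix u n a = ∑ i ∈ Finset.range n, if u i = a then 1 else 0 := by
  simp only [abPrefix, if_pos (Nat.cast_nonneg n), Int.toNat_natCast, Finset.card_filter,
    Nat.cast_sum, Nat.cast_ite, Nat.cast_one, Nat.cast_zero]

lemma abPrefix_neg_natCast (u : ℤ → A) (n : ℕ) (a : A) :
    abPrefix u (-n) a = -∑ i ∈ Finset.range n, if u (-(i + 1)) = a then 1 else 0 := by
  rcases n with _ | n
  · simp [abPrefix]
  · simp only [abPrefix, if_neg (by omega : ¬ (0 : ℤ) ≤ -((n + 1 : ℕ) : ℤ)), neg_neg,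
      Int.toNat_natCast, Finset.card_filter, Nat.cast_sum, Nat.cast_ite, Nat.cast_one,
      Nat.cast_zero]

lemma abPrefix_add_one (u : ℤ → A) (n : ℤ) (a : A) :
    abPrefix u (n + 1) a = abPrefix u n a + if u n = a then 1 else 0 := by
  rcases le_or_gt 0 n with hn | hn
  · lift n to ℕ using hn
    rw [← Nat.cast_succ, abPrefix_natCast, abPrefix_natCast, Finset.sum_range_succ]
  · obtain ⟨m, rfl⟩ : ∃ m : ℕ, n = -(m + 1 : ℕ) := ⟨(-n - 1).toNat, by omega⟩
    rw [show -((m + 1 : ℕ) : ℤ) + 1 = -m by push_cast; ring, abPrefix_neg_natCast,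
      abPrefix_neg_natCast, Finset.sum_range_succ]
    push_cast
    ring

def abVec (u : ℤ → A) (n : ℤ) : A → ℝ := fun a => (abPrefix u n a : ℝ)

def countVec (l : List A) : A → ℝ := fun a => (l.count a : ℝ)

@[simp] lemma abVec_zero (u : ℤ → A) : abVec u 0 = 0 := by
  funext a; simp [abVec, abPrefix]

lemma abVec_add_one (u : ℤ → A) (n : ℤ) : abVec u (n + 1) = abVec u n + Pi.single (u n) 1 := by
  funext a
  simp only [abVec, abPrefix_add_one, Pi.add_apply, Pi.single_apply, eq_comm (a := a)]
  push_cast; rfl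

lemma abVec_congr {z z' : ℤ → A} {c : ℤ} (h : ∀ t, |t| ≤ |c| → z t = z' t) :
    abVec z c = abVec z' c :=
  Int.apply_eq_of_increment_eq (abVec_add_one z) (abVec_add_one z') (by simp)
    fun t ht => by rw [h t ht]

lemma abVec_add (u : ℤ → A) (k c : ℤ) : abVec u (k + c) = abVec u k + abVec (shift u k) c := by
  refine Int.apply_eq_of_increment_eq (f := fun c => abVec u (k + c))
    (g := fun c => abVec u k + abVec (shift u k) c) (δ := fun c => Pi.single (u (c + k)) 1)
    (fun c => ?_) (fun c => ?_) (by simp) fun _ _ => rfl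
  · rw [← add_assoc, abVec_add_one, add_comm k c]
  · rw [abVec_add_one, add_assoc]; rfl

@[simp] lemma countVec_nil : countVec ([] : List A) = 0 := by
  funext a; simp [countVec]

lemma countVec_cons (a : A) (l : List A) : countVec (a :: l) = Pi.single a 1 + countVec l := by
  funext b
  simp only [countVec, List.count_cons, Pi.add_apply, Pi.single_apply, beq_iff_eq,
    eq_comm (a := a)]
  push_cast; ring

lemma countVec_append (l₁ l₂ : List A) : countVec (l₁ ++ l₂) = countVec l₁ + countVec l₂ := by
  funext a; simp [countVec]

lemma ReadsAt.abVec_add_length {w : ℤ → A} {i : ℤ} {l : List A} (h : ReadsAt w i l) :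
    abVec w (i + l.length) = abVec w i + countVec l := by
  induction l generalizing i with
  | nil => simp
  | cons a l ih =>
    obtain ⟨ha, hl⟩ := readsAt_cons.1 h
    rw [List.length_cons, Nat.cast_succ, ← add_assoc, add_right_comm, ih hl, abVec_add_one, ha,
      countVec_cons, add_assoc]

lemma ReadsAt.abVec_neg_length {w : ℤ → A} {l : List A} (h : ReadsAt w (-l.length) l) :
    abVec w (-l.length) = -countVec l := by
  have := h.abVec_add_length
  rw [neg_add_cancel, abVec_zero] at this
  exact eq_neg_of_add_eq_zero_left this.symm

variable [Fintype A]

lemma norm_abVec_le (u : ℤ → A) (n : ℤ) : ‖abVec u n‖ ≤ |n| := by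
  refine (pi_norm_le_iff_of_nonneg (by positivity)).2 fun a => ?_
  rw [Real.norm_eq_abs, abVec, ← Int.cast_abs, Int.cast_le]
  unfold abPrefix
  split_ifs with hn
  · have := Finset.card_filter_le (Finset.range n.toNat) fun i : ℕ => u i = a
    rw [Finset.card_range] at this
    rw [abs_of_nonneg (by positivity), Int.abs_eq_natAbs]; omega
  · have := Finset.card_filter_le (Finset.range (-n).toNat) fun i : ℕ => u (-(i + 1)) = a
    rw [Finset.card_range] at this
    rw [abs_neg, abs_of_nonneg (by positivity), Int.abs_eq_natAbs]; omega

lemma norm_countVec_le (l : List A) : ‖countVec l‖ ≤ l.length :=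
  (pi_norm_le_iff_of_nonneg (by positivity)).2 fun a => by
    rw [Real.norm_eq_abs, countVec, abs_of_nonneg (by positivity)]
    exact_mod_cast List.count_le_length

lemma incMat_mulVec_single (θ : A → List A) (a : A) :
    incMat θ *ᵥ Pi.single a 1 = countVec (θ a) := by
  rw [mulVec_single_one]; rfl

lemma countVec_flatMap (θ : A → List A) (l : List A) :
    countVec (l.flatMap θ) = incMat θ *ᵥ countVec l := by
  induction l with
  | nil => simp
  | cons a l ih =>
    rw [List.flatMap_cons, countVec_append, ih, countVec_cons, mulVec_add, incMat_mulVec_single]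

lemma incMat_flatMap (σ θ : A → List A) :
    incMat (fun a => (σ a).flatMap θ) = incMat θ * incMat σ := by
  ext c b
  exact congrFun (countVec_flatMap θ (σ b)) c

lemma incMat_substPow (σ : A → List A) (N : ℕ) : incMat (substPow σ N) = incMat σ ^ N := by
  induction N with
  | zero =>
    ext c b
    simp [incMat, substPow, one_apply, List.count_singleton, eq_comm (a := b)]
  | succ N ih => rw [pow_succ, ← ih]; exact incMat_flatMap σ (substPow σ N)

namespace IsSubstImageWith

variable {θ : A → List A} {z w : ℤ → A} {L : ℤ → ℤ}

lemma abVec_eq_mulVec (h : IsSubstImageWith θ z w L) (k : ℤ) :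
    abVec w (L k) = incMat θ *ᵥ abVec z k :=
  Int.apply_eq_of_increment_eq (f := fun k => abVec w (L k))
    (g := fun k => incMat θ *ᵥ abVec z k) (δ := fun k => countVec (θ (z k)))
    (fun k => by rw [h.add_one, (h.readsAt k).abVec_add_length])
    (fun k => by rw [abVec_add_one, mulVec_add, incMat_mulVec_single])
    (by simp [h.zero]) fun _ _ => rfl

/-- One digit of the Dumont–Thomas expansion of `ab(w_{[0,i)})`. -/
lemma exists_abVec_eq_mulVec_add (h : IsSubstImageWith θ z w L) (hθ : ∀ a, θ a ≠ []) (i : ℤ) :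
    ∃ k, |k| ≤ |i| ∧ ∃ q, q <+: θ (z k) ∧ abVec w i = incMat θ *ᵥ abVec z k + countVec q := by
  obtain ⟨k, hki, hk, hk1⟩ := h.exists_block hθ i
  let q := (θ (z k)).take (i - L k).toNat
  have hq : i = L k + q.length := by
    rw [h.add_one] at hk1; simp only [q, List.length_take]; omega
  refine ⟨k, hki, q, List.take_prefix _ _, ?_⟩
  rw [hq, ((h.readsAt k).of_isPrefix (List.take_prefix _ _)).abVec_add_length, h.abVec_eq_mulVec]

lemma norm_apply_abVec_le {F : Type*} [NormedAddCommGroup F] [NormedSpace ℝ F] {u : ℤ → A}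
    (hθ : ∀ a, θ a ≠ []) (hu : IsSubstImageWith θ u u L) (Φ : ℕ → (A → ℝ) →L[ℝ] F)
    (hΦ : ∀ n a, Φ (n + 1) a = Φ n (incMat θ *ᵥ a)) (hsum : Summable fun n => ‖Φ n‖) {C : ℝ}
    (hC : ∀ a, ((θ a).length : ℝ) ≤ C) (N : ℕ) (k : ℤ) :
    ‖Φ N (abVec u k)‖ ≤ C * ∑' j, ‖Φ (j + N)‖ := by
  refine norm_apply_le_tsum_of_forall_exists_eq_add Φ _ hΦ hsum (S := abVec u '' {i | |i| ≤ |k|})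
    (R := |k|) ?_ ?_ N ⟨k, le_refl |k|, rfl⟩
  · rintro _ ⟨i, hi, rfl⟩
    exact (norm_abVec_le u i).trans (by exact_mod_cast hi)
  · rintro _ ⟨i, hi, rfl⟩
    obtain ⟨i', hi', q, hq, heq⟩ := hu.exists_abVec_eq_mulVec_add hθ i
    refine ⟨_, ⟨i', hi'.trans hi, rfl⟩, countVec q, ?_, heq⟩
    exact (norm_countVec_le q).trans ((Nat.cast_le.2 hq.length_le).trans (hC _))

end IsSubstImageWith

/-- Peeling off `p N` moves the origin of `w` back over the block `σ^N (p N)`; by the cocycle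
identity this contributes `V (M^N ab(p N))`, the `N`-th term of the series. -/
lemma exists_isSubstImageWith_and_eq_add_sum {F : Type*} [AddCommGroup F] [Module ℝ F]
    [TopologicalSpace F] {Ω : Set (ℤ → A)} {φ : (ℤ → A) → F} {σ : A → List A}
    {V : (A → ℝ) →L[ℝ] F} (hshift : ∀ z ∈ Ω, ∀ c, shift z c ∈ Ω)
    (hcoc : ∀ w ∈ Ω, ∀ c, φ (shift w c) = φ w + V (abVec w c)) {v : ℤ → A} (hv : v ∈ Ω)
    {x : ℕ → ℤ → A} {p : ℕ → List A} (hx0 : x 0 = v) (hp : ∀ n, p n <+: σ (x (n + 1) 0))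
    (hdesub : ∀ n, IsSubstImage σ (x (n + 1)) (fun i => x n (i - (p n).length))) (N : ℕ) :
    ∃ w ∈ Ω, (∃ L, IsSubstImageWith (substPow σ N) (x N) w L) ∧
      φ v = ∑ n ∈ Finset.range N, V (incMat σ ^ n *ᵥ countVec (p n)) + φ w := by
  induction N with
  | zero => exact ⟨v, hv, ⟨id, hx0 ▸ isSubstImageWith_singleton v⟩, by simp⟩
  | succ N ih =>
    obtain ⟨w, hw, ⟨L, hL⟩, hφv⟩ := ih
    obtain ⟨L₁, h₁⟩ := isSubstImage_iff.1 (hdesub N)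
    change IsSubstImageWith σ (x (N + 1)) (shift (x N) (-(p N).length)) L₁ at h₁
    have hreads : ReadsAt (x N) (-(p N).length) (p N) := by
      have := (h₁.readsAt 0).of_isPrefix (hp N)
      rwa [h₁.zero, readsAt_shift, zero_add] at this
    refine ⟨_, hshift w hw _, ⟨_, h₁.comp (hL.shift _)⟩, ?_⟩
    rw [hφv, Finset.sum_range_succ, hcoc w hw, hL.abVec_eq_mulVec, incMat_substPow,
      hreads.abVec_neg_length, mulVec_neg, map_neg]
    abel

end Abelianization

section Dynamics

variable [TopologicalSpace A] [DiscreteTopology A] {ι : Type*} {l : Filter ι}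

lemma exists_tendsto_shift {u y : ℤ → A}
    (hy : y ∈ closure {z : ℤ → A | ∃ n : ℤ, z = fun i => u (i + n)}) :
    ∃ k : ℕ → ℤ, Tendsto (fun j => shift u (k j)) atTop (𝓝 y) := by
  obtain ⟨g, hg, hlim⟩ := mem_closure_iff_seq_limit.1 hy
  choose k hk using hg
  exact ⟨k, (funext fun j => (hk j).symm : (fun j => shift u (k j)) = g) ▸ hlim⟩

lemma tendsto_iff_eventually_apply_eq {g : ι → ℤ → A} {y : ℤ → A} :
    Tendsto g l (𝓝 y) ↔ ∀ i, ∀ᶠ j in l, g j i = y i := by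
  simp only [tendsto_pi_nhds, nhds_discrete, tendsto_pure]

lemma eventually_forall_abs_le_eq {g : ι → ℤ → A} {y : ℤ → A} (h : Tendsto g l (𝓝 y))
    (R : ℤ) : ∀ᶠ j in l, ∀ t, |t| ≤ R → g j t = y t := by
  have := ((Set.finite_Icc (-R) R).eventually_all (p := fun t j => g j t = y t)).2
    fun t _ => tendsto_iff_eventually_apply_eq.1 h t
  filter_upwards [this] with j hj t ht
  exact hj t (abs_le.1 ht)

lemma IsSubstImageWith.tendsto {θ : A → List A} (hθ : ∀ a, θ a ≠ []) {y w : ℤ → A}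
    {L : ℤ → ℤ} (h : IsSubstImageWith θ y w L) {g g' : ι → ℤ → A} {L' : ι → ℤ → ℤ}
    (hg : ∀ j, IsSubstImageWith θ (g j) (g' j) (L' j)) (hlim : Tendsto g l (𝓝 y)) :
    Tendsto g' l (𝓝 w) :=
  tendsto_iff_eventually_apply_eq.2 fun i => by
    filter_upwards [eventually_forall_abs_le_eq hlim |i|] with j hj
    exact (hg j).apply_eq h hθ hj

variable {F : Type*} [NormedAddCommGroup F] {Ω : Set (ℤ → A)} {φ : (ℤ → A) → F} {u : ℤ → A}

/-- The identity holds on the orbit of `u` by `abVec_add`, and passes to `Ω` by density and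
continuity, `abVec w c` depending only on `w` near `0`. -/
lemma map_shift_eq_add [DecidableEq A] [NormedSpace ℝ F] {V : (A → ℝ) →L[ℝ] F}
    (hcont : ContinuousOn φ Ω) (hshift : ∀ z ∈ Ω, ∀ c, shift z c ∈ Ω) (hu : u ∈ Ω)
    (hdense : ∀ y ∈ Ω, y ∈ closure {z : ℤ → A | ∃ n : ℤ, z = fun i => u (i + n)})
    (hφ : ∀ n, φ (shift u n) = V (abVec u n)) {w : ℤ → A} (hw : w ∈ Ω) (c : ℤ) :
    φ (shift w c) = φ w + V (abVec w c) := by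
  obtain ⟨k, hk⟩ := exists_tendsto_shift (hdense w hw)
  have hlim : ∀ {g : ℕ → ℤ → A} {y}, y ∈ Ω → (∀ j, g j ∈ Ω) → Tendsto g atTop (𝓝 y) →
      Tendsto (fun j => φ (g j)) atTop (𝓝 (φ y)) := fun hy hg h =>
    (hcont _ hy).tendsto.comp
      (tendsto_nhdsWithin_of_tendsto_nhds_of_eventually_within _ h (Eventually.of_forall hg))
  have hkc : Tendsto (fun j => shift (shift u (k j)) c) atTop (𝓝 (shift w c)) :=
    ((continuous_pi fun i => continuous_apply (i + c)).tendsto w).comp hk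
  have hdiff := (hlim (hshift w hw c) (fun j => hshift _ (hshift u hu _) c) hkc).sub
    (hlim hw (fun j => hshift u hu _) hk)
  have hev : ∀ᶠ j in atTop, φ (shift (shift u (k j)) c) - φ (shift u (k j)) = V (abVec w c) := by
    filter_upwards [eventually_forall_abs_le_eq hk |c|] with j hj
    rw [shift_shift, hφ, hφ, ← map_sub, add_comm c, abVec_add, add_sub_cancel_left, abVec_congr hj]
  rw [← sub_eq_iff_eq_add', tendsto_nhds_unique hdiff
    (tendsto_const_nhds.congr' (hev.mono fun _ h => h.symm))]

lemma norm_le_of_isSubstImageWith {θ : A → List A} (hθ : ∀ a, θ a ≠ []) {Lu : ℤ → ℤ}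
    (hcont : ContinuousOn φ Ω) (hshift : ∀ z ∈ Ω, ∀ c, shift z c ∈ Ω) (hu : u ∈ Ω)
    (hdense : ∀ y ∈ Ω, y ∈ closure {z : ℤ → A | ∃ n : ℤ, z = fun i => u (i + n)})
    (hLu : IsSubstImageWith θ u u Lu) {B : ℝ} (hB : ∀ k, ‖φ (shift u (Lu k))‖ ≤ B)
    {y w : ℤ → A} {L : ℤ → ℤ} (hy : y ∈ Ω) (hw : w ∈ Ω) (h : IsSubstImageWith θ y w L) :
    ‖φ w‖ ≤ B := by
  obtain ⟨k, hk⟩ := exists_tendsto_shift (hdense y hy)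
  have hconv := h.tendsto hθ (fun j => hLu.shift (k j)) hk
  have hφconv := (hcont w hw).tendsto.comp
    (tendsto_nhdsWithin_of_tendsto_nhds_of_eventually_within _ hconv
      (Eventually.of_forall fun j => hshift u hu _))
  exact le_of_tendsto' hφconv.norm fun j => hB (k j)

end Dynamics

end Substitution

open Substitution Filter Topology Matrix in
theorem stmt_18_general {A : Type*} [Fintype A] [DecidableEq A]
    [TopologicalSpace A] [DiscreteTopology A] {d : ℕ}
    (σ : A → List A) (hσ : ∀ a, σ a ≠ [])
    (Ω : Set (ℤ → A))
    (hinv : (fun x : ℤ → A => fun i => x (i + 1)) '' Ω = Ω)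
    (hmin : ∀ x ∈ Ω, ∀ y ∈ Ω, y ∈ closure {z : ℤ → A | ∃ n : ℤ, z = fun i => x (i + n)})
    (u : ℤ → A) (hu : u ∈ Ω) (hfix : IsSubstImage σ u u)
    (V : (A → ℝ) →L[ℝ] (Fin d → ℝ))
    (hsum : Summable fun n : ℕ =>
      ‖V.comp (LinearMap.toContinuousLinearMap (Matrix.mulVecLin ((incMat σ) ^ n)))‖)
    (φ : (ℤ → A) → (Fin d → ℝ)) (hcont : ContinuousOn φ Ω)
    (hφ : ∀ n : ℤ, φ (fun i => u (i + n)) = V fun a => (abPrefix u n a : ℝ))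
    (v : ℤ → A) (hv : v ∈ Ω)
    (x : ℕ → (ℤ → A)) (p s : ℕ → List A) (hx0 : x 0 = v)
    (hxΩ : ∀ n, x n ∈ Ω)
    (hps : ∀ n, σ ((x (n + 1)) 0) = p n ++ (x n) 0 :: s n)
    (hdesub : ∀ n, IsSubstImage σ (x (n + 1)) (fun i => (x n) (i - ((p n).length : ℤ)))) :
    φ v = ∑' n : ℕ, V (((incMat σ) ^ n).mulVec (fun a => ((p n).count a : ℝ))) := by
  set Φ : ℕ → (A → ℝ) →L[ℝ] (Fin d → ℝ) :=
    fun n => V.comp (LinearMap.toContinuousLinearMap (Matrix.mulVecLin ((incMat σ) ^ n)))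
  have hΦ : ∀ n a, Φ (n + 1) a = Φ n (incMat σ *ᵥ a) := fun n a => by
    simp [Φ, pow_succ, mulVec_mulVec]
  obtain ⟨C, hC⟩ := Finite.exists_le fun a => ((σ a).length : ℝ)
  have hp : ∀ n, p n <+: σ (x (n + 1) 0) := fun n => ⟨_, (hps n).symm⟩
  obtain ⟨Lu, hLu⟩ := isSubstImage_iff.1 hfix
  have hshift : ∀ z ∈ Ω, ∀ c, shift z c ∈ Ω := fun z hz c => shift_mem hinv hz c
  have hcoc : ∀ w ∈ Ω, ∀ c, φ (shift w c) = φ w + V (abVec w c) :=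
    fun w hw => map_shift_eq_add hcont hshift hu (hmin u hu) hφ hw
  have hrem : ∀ N, ‖φ v - ∑ n ∈ Finset.range N, V (incMat σ ^ n *ᵥ countVec (p n))‖ ≤
      C * ∑' j, ‖Φ (j + N)‖ := by
    intro N
    obtain ⟨w, hw, ⟨L, hL⟩, hφv⟩ :=
      exists_isSubstImageWith_and_eq_add_sum hshift hcoc hv hx0 hp hdesub N
    rw [hφv, add_sub_cancel_left]
    refine norm_le_of_isSubstImageWith (substPow_ne_nil hσ N) hcont hshift hu (hmin u hu)
      (hLu.substPow N) (fun k => ?_) (hxΩ N) hw hL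
    rw [show φ (shift u _) = V (abVec u _) from hφ _, (hLu.substPow N).abVec_eq_mulVec,
      incMat_substPow]
    exact hLu.norm_apply_abVec_le hσ Φ hΦ hsum hC N k
  have hsummable : Summable fun n => V (incMat σ ^ n *ᵥ countVec (p n)) :=
    .of_norm_bounded (hsum.mul_right C) fun n => (Φ n).le_of_opNorm_le_of_le le_rfl
      ((norm_countVec_le _).trans ((Nat.cast_le.2 (hp n).length_le).trans (hC _)))
  exact (tsum_eq_of_norm_sub_sum_le hsummable hrem
    (by simpa using (tendsto_sum_nat_add fun n => ‖Φ n‖).const_mul C)).symm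

theorem stmt_18 {A : Type*} [Fintype A] [DecidableEq A]
    [TopologicalSpace A] [DiscreteTopology A] {d : ℕ}
    (σ : A → List A) (hσ : ∀ a, σ a ≠ [])
    (Ω : Set (ℤ → A)) (hclosed : IsClosed Ω)
    (hinv : (fun x : ℤ → A => fun i => x (i + 1)) '' Ω = Ω)
    (hmin : ∀ x ∈ Ω, ∀ y ∈ Ω, y ∈ closure {z : ℤ → A | ∃ n : ℤ, z = fun i => x (i + n)})
    (haper : ∀ x ∈ Ω, ∀ n : ℤ, (fun i => x (i + n)) = x → n = 0)
    (u : ℤ → A) (hu : u ∈ Ω) (hfix : IsSubstImage σ u u)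
    (V : (A → ℝ) →L[ℝ] (Fin d → ℝ))
    (hsum : Summable fun n : ℕ =>
      ‖V.comp (LinearMap.toContinuousLinearMap (Matrix.mulVecLin ((incMat σ) ^ n)))‖)
    (φ : (ℤ → A) → (Fin d → ℝ)) (hcont : ContinuousOn φ Ω)
    (hφ : ∀ n : ℤ, φ (fun i => u (i + n)) = V fun a => (abPrefix u n a : ℝ))
    (v : ℤ → A) (hv : v ∈ Ω)
    (x : ℕ → (ℤ → A)) (p s : ℕ → List A) (hx0 : x 0 = v)
    (hxΩ : ∀ n, x n ∈ Ω)
    (hps : ∀ n, σ ((x (n + 1)) 0) = p n ++ (x n) 0 :: s n)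
    (hdesub : ∀ n, IsSubstImage σ (x (n + 1)) (fun i => (x n) (i - ((p n).length : ℤ)))) :
    φ v = ∑' n : ℕ, V (((incMat σ) ^ n).mulVec (fun a => ((p n).count a : ℝ))) :=
  stmt_18_general σ hσ Ω hinv hmin u hu hfix V hsum φ hcont hφ v hv x p s hx0 hxΩ hps hdesub
end
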